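/- arXiv:math/0508511 — 7 statements merged into one kernel-verified Lean document; each statement's English description precedes it below -/
import Mathlib

section
/- Let n ≥ 2 and consider type C_n with positive roots R^+ = {ε_i − ε_j : 1 ≤ i < j ≤ n} ∪ {ε_i + ε_j : 1 ≤ i ≤ j ≤ n}, Weyl group W = signed permutations of Z^n, and ρ = (n, n−1, …, 1). For λ, μ partitions with at most m ≤ n parts and k ≥ (|λ| − |μ|)/2, every w ∈ W \ S_n contributes zero to the alternating sum Σ_{w ∈ W} (-1)^{ℓ(w)} P_C(w(λ+(k^n)+ρ) − (μ+(k^n)+ρ)), where P_C is the q-partition function for R^+; hence this sum equals Σ_{w ∈ S_n} (-1)^{ℓ(w)} P_C(w(λ+ρ) − (μ+ρ)). -/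
/-- The root `ε_i - ε_j` (as a vector in `ℤ^n`). -/
def rootMinus (n : ℕ) (i j : Fin n) : Fin n → ℤ :=
  fun x => (if x = i then 1 else 0) - (if x = j then 1 else 0)

/-- The root `ε_i + ε_j` (as a vector in `ℤ^n`). -/
def rootPlus (n : ℕ) (i j : Fin n) : Fin n → ℤ :=
  fun x => (if x = i then 1 else 0) + (if x = j then 1 else 0)

/-- Coefficient of `q^k` in the type `C_n` `q`-partition function at `β`:
the number of multisets of `k` positive roots (`ε_i - ε_j`, `i < j`, and
`ε_i + ε_j`, `i ≤ j`) summing to `β`. -/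
noncomputable def PCcoeff (n k : ℕ) (β : Fin n → ℤ) : ℕ :=
  Nat.card {c : (Fin n → Fin n → ℕ) × (Fin n → Fin n → ℕ) //
    (∀ i j : Fin n, ¬ i < j → c.1 i j = 0) ∧
    (∀ i j : Fin n, ¬ i ≤ j → c.2 i j = 0) ∧
    ((∑ i : Fin n, ∑ j : Fin n, c.1 i j) + ∑ i : Fin n, ∑ j : Fin n, c.2 i j) = k ∧
    ∀ x : Fin n,
      ((∑ i : Fin n, ∑ j : Fin n, (c.1 i j : ℤ) * rootMinus n i j x) +
        ∑ i : Fin n, ∑ j : Fin n, (c.2 i j : ℤ) * rootPlus n i j x) = β x}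

/-- `ρ = (n, n-1, …, 1)` for type `C_n`. -/
def rhoC (n : ℕ) : Fin n → ℤ := fun i => (n : ℤ) - (i : ℤ)

/-- The signed permutation `(σ, ε)` of the Weyl group of type `C_n` acting on `ℤ^n`. -/
def signedAct (n : ℕ) (σ : Equiv.Perm (Fin n)) (ε : Fin n → Bool) (v : Fin n → ℤ) :
    Fin n → ℤ :=
  fun x => (if ε x then -1 else 1) * v (σ⁻¹ x)

/-- `(-1)^{ℓ(w)}` for the signed permutation `w = (σ, ε)`. -/
def signedSign (n : ℕ) (σ : Equiv.Perm (Fin n)) (ε : Fin n → Bool) : ℤ :=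
  (Equiv.Perm.sign σ : ℤ) * (-1) ^ (Finset.univ.filter fun i : Fin n => ε i = true).card


lemma sum_rootMinus (n : ℕ) (i j : Fin n) : ∑ x : Fin n, rootMinus n i j x = 0 := by
  simp [rootMinus, Finset.sum_sub_distrib]

lemma sum_rootPlus (n : ℕ) (i j : Fin n) : ∑ x : Fin n, rootPlus n i j x = 2 := by
  simp [rootPlus, Finset.sum_add_distrib]

lemma PCcoeff_eq_zero (n d : ℕ) (β : Fin n → ℤ) (h : ∑ x : Fin n, β x < 0) :
    PCcoeff n d β = 0 := by
  have : IsEmpty {c : (Fin n → Fin n → ℕ) × (Fin n → Fin n → ℕ) //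
    (∀ i j : Fin n, ¬ i < j → c.1 i j = 0) ∧
    (∀ i j : Fin n, ¬ i ≤ j → c.2 i j = 0) ∧
    ((∑ i : Fin n, ∑ j : Fin n, c.1 i j) + ∑ i : Fin n, ∑ j : Fin n, c.2 i j) = d ∧
    ∀ x : Fin n,
      ((∑ i : Fin n, ∑ j : Fin n, (c.1 i j : ℤ) * rootMinus n i j x) +
        ∑ i : Fin n, ∑ j : Fin n, (c.2 i j : ℤ) * rootPlus n i j x) = β x} := by
    constructor
    rintro ⟨⟨c1, c2⟩, h1, h2, h3, h4⟩
    have key : ∑ x : Fin n, β x = 2 * ∑ i : Fin n, ∑ j : Fin n, (c2 i j : ℤ) := by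
      calc ∑ x : Fin n, β x
          = ∑ x : Fin n, ((∑ i : Fin n, ∑ j : Fin n, (c1 i j : ℤ) * rootMinus n i j x) +
              ∑ i : Fin n, ∑ j : Fin n, (c2 i j : ℤ) * rootPlus n i j x) :=
            Finset.sum_congr rfl fun x _ => (h4 x).symm
        _ = (∑ i : Fin n, ∑ j : Fin n, (c1 i j : ℤ) * ∑ x : Fin n, rootMinus n i j x) +
              ∑ i : Fin n, ∑ j : Fin n, (c2 i j : ℤ) * ∑ x : Fin n, rootPlus n i j x := by
            rw [Finset.sum_add_distrib]
            congr 1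
            · rw [Finset.sum_comm]
              refine Finset.sum_congr rfl fun i _ => ?_
              rw [Finset.sum_comm]
              exact Finset.sum_congr rfl fun j _ => (Finset.mul_sum _ _ _).symm
            · rw [Finset.sum_comm]
              refine Finset.sum_congr rfl fun i _ => ?_
              rw [Finset.sum_comm]
              exact Finset.sum_congr rfl fun j _ => (Finset.mul_sum _ _ _).symm
        _ = 2 * ∑ i : Fin n, ∑ j : Fin n, (c2 i j : ℤ) := by
            simp [sum_rootMinus, sum_rootPlus, Finset.mul_sum, mul_comm]
    have hnn : (0 : ℤ) ≤ ∑ i : Fin n, ∑ j : Fin n, (c2 i j : ℤ) :=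
      Finset.sum_nonneg fun i _ => Finset.sum_nonneg fun j _ => Int.natCast_nonneg _
    omega
  rw [PCcoeff]
  exact Nat.card_of_isEmpty

/-- for partitions `λ, μ` with at most `m ≤ n` parts and
`k ≥ (|λ| - |μ|)/2`, every signed permutation `w ∉ S_n` contributes zero to the
type `C_n` alternating sum with shifted weights `λ + (k^n)`, `μ + (k^n)`; hence
that sum equals the corresponding sum over `S_n` with the unshifted weights. -/
theorem C_alternating_sum_stability (n m : ℕ) (hn : 2 ≤ n) (hm : m ≤ n)
    (lam mu : Fin n → ℤ) (hlam : Antitone lam) (hmu : Antitone mu)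
    (hlam0 : ∀ i, 0 ≤ lam i) (hmu0 : ∀ i, 0 ≤ mu i)
    (hlamm : ∀ i : Fin n, m ≤ (i : ℕ) → lam i = 0)
    (hmum : ∀ i : Fin n, m ≤ (i : ℕ) → mu i = 0)
    (k : ℕ) (hk : (∑ i : Fin n, lam i) - (∑ i : Fin n, mu i) ≤ 2 * (k : ℤ)) :
    (∀ (σ : Equiv.Perm (Fin n)) (ε : Fin n → Bool), ε ≠ (fun _ => false) →
      ∀ d : ℕ,
        PCcoeff n d (fun x =>
          signedAct n σ ε (fun i => lam i + (k : ℤ) + rhoC n i) x -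
            (mu x + (k : ℤ) + rhoC n x)) = 0) ∧
    (∀ d : ℕ,
      (∑ σ : Equiv.Perm (Fin n), ∑ ε : Fin n → Bool,
        signedSign n σ ε *
          PCcoeff n d (fun x =>
            signedAct n σ ε (fun i => lam i + (k : ℤ) + rhoC n i) x -
              (mu x + (k : ℤ) + rhoC n x))) =
      ∑ σ : Equiv.Perm (Fin n),
        (Equiv.Perm.sign σ : ℤ) *
          PCcoeff n d (fun x =>
            (lam (σ⁻¹ x) + rhoC n (σ⁻¹ x)) - (mu x + rhoC n x))) := by

  have hv1 : ∀ i : Fin n, (k : ℤ) + 1 ≤ lam i + (k : ℤ) + rhoC n i := by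
    intro i
    have h1 : (i : ℤ) < n := by exact_mod_cast i.isLt
    have := hlam0 i
    simp only [rhoC]
    linarith
  have part1 : ∀ (σ : Equiv.Perm (Fin n)) (ε : Fin n → Bool), ε ≠ (fun _ => false) →
      ∀ d : ℕ,
        PCcoeff n d (fun x =>
          signedAct n σ ε (fun i => lam i + (k : ℤ) + rhoC n i) x -
            (mu x + (k : ℤ) + rhoC n x)) = 0 := by
    intro σ ε hε d
    apply PCcoeff_eq_zero
    obtain ⟨x0, hx0⟩ : ∃ x0, ε x0 = true := by
      by_contra h
      push_neg at h
      exact hε (funext fun x => by simpa using h x)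
    set v : Fin n → ℤ := fun i => lam i + (k : ℤ) + rhoC n i with hv_def
    have hb : ∀ x : Fin n, (if ε x then (-1 : ℤ) else 1) * v (σ⁻¹ x) ≤
        v (σ⁻¹ x) + (if x = x0 then -2 * ((k : ℤ) + 1) else 0) := by
      intro x
      by_cases hx : x = x0
      · subst hx
        rw [if_pos hx0, if_pos rfl]
        have := hv1 (σ⁻¹ x); simp only [hv_def]; linarith
      · rw [if_neg hx]
        by_cases hε' : ε x = true
        · rw [if_pos hε']
          have := hv1 (σ⁻¹ x); simp only [hv_def]; linarith
        · rw [if_neg hε']; linarith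
    have hsum1 : ∑ x : Fin n, (if ε x then (-1 : ℤ) else 1) * v (σ⁻¹ x) ≤
        (∑ x : Fin n, v (σ⁻¹ x)) - 2 * ((k : ℤ) + 1) := by
      calc ∑ x : Fin n, (if ε x then (-1 : ℤ) else 1) * v (σ⁻¹ x)
          ≤ ∑ x : Fin n, (v (σ⁻¹ x) + (if x = x0 then -2 * ((k : ℤ) + 1) else 0)) :=
            Finset.sum_le_sum fun x _ => hb x
        _ = (∑ x : Fin n, v (σ⁻¹ x)) - 2 * ((k : ℤ) + 1) := by
            rw [Finset.sum_add_distrib, Finset.sum_ite_eq' Finset.univ x0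
              (fun _ => -2 * ((k : ℤ) + 1))]
            simp; ring
    have hre : ∑ x : Fin n, v (σ⁻¹ x) = ∑ i : Fin n, v i := Equiv.sum_comp σ⁻¹ v
    have hsplit : ∑ x : Fin n, (signedAct n σ ε v x - (mu x + (k : ℤ) + rhoC n x)) =
        (∑ x : Fin n, (if ε x then (-1 : ℤ) else 1) * v (σ⁻¹ x)) -
          ∑ x : Fin n, (mu x + (k : ℤ) + rhoC n x) := by
      rw [Finset.sum_sub_distrib]
      rfl
    have e1 : ∑ i : Fin n, v i =
        (∑ i : Fin n, lam i) + ∑ i : Fin n, ((k : ℤ) + rhoC n i) := by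
      rw [← Finset.sum_add_distrib]
      exact Finset.sum_congr rfl fun i _ => by simp only [hv_def]; ring
    have e2 : ∑ x : Fin n, (mu x + (k : ℤ) + rhoC n x) =
        (∑ x : Fin n, mu x) + ∑ x : Fin n, ((k : ℤ) + rhoC n x) := by
      rw [← Finset.sum_add_distrib]
      exact Finset.sum_congr rfl fun i _ => by ring
    rw [hsplit]
    rw [hre] at hsum1
    linarith
  refine ⟨part1, ?_⟩
  intro d
  refine Finset.sum_congr rfl fun σ _ => ?_
  rw [Fintype.sum_eq_single (fun _ : Fin n => false)
    (fun ε hε => by rw [part1 σ ε hε d]; simp)]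
  have harg : (fun x =>
      signedAct n σ (fun _ => false) (fun i => lam i + (k : ℤ) + rhoC n i) x -
        (mu x + (k : ℤ) + rhoC n x)) =
      fun x => (lam (σ⁻¹ x) + rhoC n (σ⁻¹ x)) - (mu x + rhoC n x) := by
    funext x
    simp only [signedAct, if_neg Bool.false_ne_true, Bool.false_eq_true, if_false, one_mul]
    ring
  rw [harg]
  simp [signedSign]
end

section
/- Let λ, μ be partitions with at most m parts, and let M ≥ max(λ_1, μ_1). Define the complementary partitions λ̂ = (M − λ_m, …, M − λ_1) and μ̂ = (M − μ_m, …, M − μ_1). Then the Kostka numbers satisfy K_{λ,μ} = K_{λ̂,μ̂}, where K is the number of semistandard tableaux of the given shape and content (with content read as a composition of length m). -/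
open Finset

/-- The Kostka number `K_{λ,μ}` for a shape `λ` with at most `m` parts and a content
`μ` read as a composition of length `m`: the number of fillings of the diagram of `λ`
with entries in `{1,…,m}` (encoded as `Fin m`), weakly increasing along rows and
strictly increasing down columns, in which entry `r` occurs exactly `μ_r` times.
(Fillings are normalized to take the value `0` outside the diagram.) -/
noncomputable def kostkaFin (m : ℕ) (lam mu : Fin m → ℕ) : ℕ :=
  Nat.card {T : Fin m → ℕ → Fin m //
    (∀ (i : Fin m) (j j' : ℕ), j ≤ j' → j' < lam i → T i j ≤ T i j') ∧
    (∀ (i i' : Fin m) (j : ℕ), i < i' → j < lam i' → T i j < T i' j) ∧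
    (∀ (i : Fin m) (j : ℕ), lam i ≤ j → (T i j : ℕ) = 0) ∧
    ∀ r : Fin m,
      Nat.card {p : Fin m × ℕ // p.2 < lam p.1 ∧ T p.1 p.2 = r} = mu r}

namespace KC

/-- Lift a `Fin m`-indexed family to `ℕ`, zero outside. -/
def tf (m : ℕ) (f : Fin m → ℕ) : ℕ → ℕ := fun i => if h : i < m then f ⟨i, h⟩ else 0

lemma tf_apply {m : ℕ} (f : Fin m → ℕ) (i : Fin m) : tf m f i.val = f i := by
  simp [tf]

/-- Cumulative content. -/
def cum (m : ℕ) (mu : Fin m → ℕ) : ℕ → ℕ := fun r => ∑ s ∈ range (r + 1), tf m mu s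

/-- Gelfand-Tsetlin-type pattern with top row `L` and cumulative row sums `C`. -/
structure IsPat (m : ℕ) (L C : ℕ → ℕ) (N : ℕ → ℕ → ℕ) : Prop where
  zero : ∀ r i, r < i ∨ m ≤ r → N r i = 0
  mono : ∀ r i, r + 1 < m → N r i ≤ N (r + 1) i
  inter : ∀ r i, r + 1 < m → N (r + 1) (i + 1) ≤ N r i
  top : ∀ i, i < m → N (m - 1) i = L i
  rsum : ∀ r, r < m → ∑ i ∈ range m, N r i = C r

noncomputable def patCard (m : ℕ) (L C : ℕ → ℕ) : ℕ :=
  Nat.card {N : ℕ → ℕ → ℕ // IsPat m L C N}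

variable {m : ℕ} {L C : ℕ → ℕ} {N : ℕ → ℕ → ℕ}

lemma sum_nat_sub {α : Type*} (s : Finset α) (f g : α → ℕ) (h : ∀ x ∈ s, g x ≤ f x) :
    ∑ x ∈ s, (f x - g x) = ∑ x ∈ s, f x - ∑ x ∈ s, g x := by
  have h1 : ∑ x ∈ s, (f x - g x) + ∑ x ∈ s, g x = ∑ x ∈ s, f x := by
    rw [← Finset.sum_add_distrib]
    exact Finset.sum_congr rfl fun x hx => Nat.sub_add_cancel (h x hx)
  omega

lemma IsPat.mono' (hN : IsPat m L C N) {r r' : ℕ} (i : ℕ) (hrr : r ≤ r') (hr' : r' < m) :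
    N r i ≤ N r' i := by
  induction r' with
  | zero => have : r = 0 := by omega
            subst this; exact le_rfl
  | succ k ih =>
    rcases Nat.lt_or_ge r (k+1) with h | h
    · exact le_trans (ih (by omega) (by omega)) (hN.mono k i hr')
    · have : r = k + 1 := by omega
      subst this; exact le_rfl

lemma IsPat.zero_of_ge (hN : IsPat m L C N) (r i : ℕ) (hi : m ≤ i) : N r i = 0 := by
  rcases Nat.lt_or_ge r m with h | h
  · exact hN.zero r i (Or.inl (by omega))
  · exact hN.zero r i (Or.inr h)

lemma IsPat.le_L (hN : IsPat m L C N) (r i : ℕ) (hr : r < m) : N r i ≤ L i := by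
  rcases Nat.lt_or_ge i m with h | h
  · calc N r i ≤ N (m-1) i := hN.mono' i (by omega) (by omega)
    _ = L i := hN.top i h
  · rw [hN.zero_of_ge r i h]; exact Nat.zero_le _

lemma isPat_congr {L' C' : ℕ → ℕ} (hL : ∀ i, i < m → L i = L' i)
    (hC : ∀ r, r < m → C r = C' r) (hN : IsPat m L C N) : IsPat m L' C' N where
  zero := hN.zero
  mono := hN.mono
  inter := hN.inter
  top := fun i hi => (hN.top i hi).trans (hL i hi)
  rsum := fun r hr => (hN.rsum r hr).trans (hC r hr)

lemma patCard_congr {L' C' : ℕ → ℕ} (hL : ∀ i, i < m → L i = L' i)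
    (hC : ∀ r, r < m → C r = C' r) : patCard m L C = patCard m L' C' :=
  Nat.card_congr (Equiv.subtypeEquivRight fun N =>
    ⟨isPat_congr hL hC, isPat_congr (fun i hi => (hL i hi).symm) (fun r hr => (hC r hr).symm)⟩)

/-! ### E1 : tableaux ↔ patterns -/

def TC (m : ℕ) (lam mu : Fin m → ℕ) (T : Fin m → ℕ → Fin m) : Prop :=
  (∀ (i : Fin m) (j j' : ℕ), j ≤ j' → j' < lam i → T i j ≤ T i j') ∧
  (∀ (i i' : Fin m) (j : ℕ), i < i' → j < lam i' → T i j < T i' j) ∧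
  (∀ (i : Fin m) (j : ℕ), lam i ≤ j → (T i j : ℕ) = 0) ∧
  ∀ r : Fin m, Nat.card {p : Fin m × ℕ // p.2 < lam p.1 ∧ T p.1 p.2 = r} = mu r

def phi (m : ℕ) (lam : Fin m → ℕ) (T : Fin m → ℕ → Fin m) : ℕ → ℕ → ℕ :=
  fun r i => if h : i < m ∧ r < m then
    ((range (lam ⟨i, h.1⟩)).filter (fun j => (T ⟨i, h.1⟩ j : ℕ) ≤ r)).card else 0

def cnt (m : ℕ) (N : ℕ → ℕ → ℕ) (i j : ℕ) : ℕ :=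
  ((range m).filter fun r => N r i ≤ j).card

def psi (m : ℕ) (lam : Fin m → ℕ) (N : ℕ → ℕ → ℕ) : Fin m → ℕ → Fin m :=
  fun i j => if j < lam i then ⟨cnt m N i.val j % m, Nat.mod_lt _ i.pos⟩ else ⟨0, i.pos⟩

section E1
variable {lam mu : Fin m → ℕ} {T : Fin m → ℕ → Fin m}

lemma card_cells (lam : Fin m → ℕ) (T : Fin m → ℕ → Fin m) (r : Fin m) :
    Nat.card {p : Fin m × ℕ // p.2 < lam p.1 ∧ T p.1 p.2 = r}
      = ∑ i : Fin m, ((range (lam i)).filter fun j => T i j = r).card := by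
  have e1 : {p : Fin m × ℕ // p.2 < lam p.1 ∧ T p.1 p.2 = r}
      ≃ Σ i : Fin m, {j : ℕ // j < lam i ∧ T i j = r} :=
    { toFun := fun p => ⟨p.1.1, ⟨p.1.2, p.2⟩⟩
      invFun := fun x => ⟨(x.1, x.2.1), x.2.2⟩
      left_inv := fun p => rfl
      right_inv := fun x => rfl }
  have e2 : ∀ i : Fin m, {j : ℕ // j < lam i ∧ T i j = r}
      ≃ {j // j ∈ (range (lam i)).filter fun j => T i j = r} := fun i =>
    Equiv.subtypeEquivRight (by intro j; simp [Finset.mem_filter, Finset.mem_range])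
  rw [Nat.card_congr (e1.trans (Equiv.sigmaCongrRight e2))]
  rw [Nat.card_eq_fintype_card, Fintype.card_sigma]
  exact Finset.sum_congr rfl fun i _ => Fintype.card_coe _

lemma filter_le_card (s : Finset ℕ) (f : ℕ → ℕ) (r : ℕ) :
    (s.filter fun j => f j ≤ r).card = ∑ t ∈ range (r + 1), (s.filter fun j => f j = t).card := by
  induction r with
  | zero => rw [Finset.sum_range_one]
            congr 1; apply Finset.filter_congr; intro j _; simp [Nat.le_zero]
  | succ k ih =>
    rw [Finset.sum_range_succ, ← ih]
    have : (s.filter fun j => f j ≤ k + 1)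
        = (s.filter fun j => f j ≤ k) ∪ (s.filter fun j => f j = k + 1) := by
      rw [← Finset.filter_or]; apply Finset.filter_congr; intro j _
      constructor <;> (intro h; omega)
    rw [this, Finset.card_union_of_disjoint]
    rw [Finset.disjoint_filter]
    intro j _ h1 h2; omega

lemma phi_apply (r : ℕ) (hr : r < m) (i : Fin m) :
    phi m lam T r i.val = ((range (lam i)).filter (fun j => (T i j : ℕ) ≤ r)).card := by
  simp [phi, i.isLt, hr]

lemma colchain (hlam : Antitone lam) (hT : TC m lam mu T) :
    ∀ (n : ℕ) (i : Fin m), i.val = n → ∀ j, j < lam i → n ≤ (T i j : ℕ) := by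
  intro n
  induction n with
  | zero => intro i _ j _; exact Nat.zero_le _
  | succ k ih =>
    intro i hi j hj
    have hk : k < m := by have := i.isLt; omega
    set i' : Fin m := ⟨k, hk⟩ with hi'
    have hii : i' < i := by rw [Fin.lt_def]; simp only [hi']; omega
    have h1 : T i' j < T i j := hT.2.1 i' i j hii hj
    have hji' : j < lam i' := lt_of_lt_of_le hj (hlam (le_of_lt hii))
    have h2 : k ≤ (T i' j : ℕ) := ih i' rfl j hji'
    rw [Fin.lt_def] at h1
    omega

lemma phi_isPat (hlam : Antitone lam) (hT : TC m lam mu T) :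
    IsPat m (tf m lam) (cum m mu) (phi m lam T) where
  zero := by
    intro r i h
    by_cases hg : i < m ∧ r < m
    · have hri : r < i := by omega
      simp only [phi, dif_pos hg]
      rw [Finset.card_eq_zero, Finset.filter_eq_empty_iff]
      intro j hj
      have := colchain hlam hT i ⟨i, hg.1⟩ rfl j (by simpa using hj)
      omega
    · simp [phi, hg]
  mono := by
    intro r i hr
    by_cases hi : i < m
    · simp only [phi, dif_pos (⟨hi, by omega⟩ : i < m ∧ r < m),
        dif_pos (⟨hi, hr⟩ : i < m ∧ r + 1 < m)]
      apply Finset.card_le_card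
      intro j hj
      simp only [Finset.mem_filter, Finset.mem_range] at *
      omega
    · simp [phi, hi]
  inter := by
    intro r i hr
    by_cases hi : i + 1 < m
    · have hi0 : i < m := by omega
      have e1 : phi m lam T (r + 1) (i + 1)
          = ((range (lam ⟨i + 1, hi⟩)).filter
              (fun j => (T ⟨i + 1, hi⟩ j : ℕ) ≤ r + 1)).card :=
        phi_apply (r + 1) hr (⟨i + 1, hi⟩ : Fin m)
      have e2 : phi m lam T r i
          = ((range (lam ⟨i, hi0⟩)).filter (fun j => (T ⟨i, hi0⟩ j : ℕ) ≤ r)).card :=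
        phi_apply r (by omega) (⟨i, hi0⟩ : Fin m)
      rw [e1, e2]
      apply Finset.card_le_card
      intro j hj
      simp only [Finset.mem_filter, Finset.mem_range] at hj ⊢
      obtain ⟨hj1, hj2⟩ := hj
      have hle : (⟨i, hi0⟩ : Fin m) < ⟨i + 1, hi⟩ := Fin.mk_lt_mk.mpr (by omega)
      have hstr := hT.2.1 ⟨i, hi0⟩ ⟨i + 1, hi⟩ j hle hj1
      rw [Fin.lt_def] at hstr
      have hsh : j < lam ⟨i, hi0⟩ := lt_of_lt_of_le hj1 (hlam (le_of_lt hle))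
      exact ⟨hsh, Nat.lt_succ_iff.mp (lt_of_lt_of_le hstr hj2)⟩
    · simp [phi, hi]
  top := by
    intro i hi
    have hm1 : m - 1 < m := by omega
    simp only [phi, dif_pos (⟨hi, hm1⟩ : i < m ∧ m - 1 < m)]
    rw [Finset.filter_true_of_mem, Finset.card_range, tf]
    · rw [dif_pos hi]
    · intro j _
      have := (T ⟨i, hi⟩ j).isLt
      omega
  rsum := by
    intro r hr
    rw [← Fin.sum_univ_eq_sum_range (fun i => phi m lam T r i) m]
    have step1 : ∀ i : Fin m, phi m lam T r i.val
        = ∑ s ∈ range (r + 1), ((range (lam i)).filter fun j => (T i j : ℕ) = s).card := by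
      intro i
      rw [phi_apply r hr i, filter_le_card]
    rw [Finset.sum_congr rfl fun i _ => step1 i, Finset.sum_comm]
    unfold cum
    apply Finset.sum_congr rfl
    intro s hs
    have hsm : s < m := by
      rw [Finset.mem_range] at hs; omega
    have : ∀ i : Fin m, ((range (lam i)).filter fun j => (T i j : ℕ) = s)
        = ((range (lam i)).filter fun j => T i j = (⟨s, hsm⟩ : Fin m)) := by
      intro i
      apply Finset.filter_congr
      intro j _
      rw [Fin.ext_iff]
    rw [Finset.sum_congr rfl fun i _ => by rw [this i], ← card_cells lam T ⟨s, hsm⟩,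
      hT.2.2.2 ⟨s, hsm⟩, tf, dif_pos hsm]

end E1

section E1psi
variable {lam mu : Fin m → ℕ} {T : Fin m → ℕ → Fin m}

lemma lt_cnt (hN : IsPat m L C N) {r i j : ℕ} (hr : r < m) (h : N r i ≤ j) :
    r < cnt m N i j := by
  have hsub : range (r + 1) ⊆ (range m).filter fun r' => N r' i ≤ j := by
    intro r' hr'
    rw [Finset.mem_range] at hr'
    rw [Finset.mem_filter, Finset.mem_range]
    exact ⟨by omega, le_trans (hN.mono' i (by omega) hr) h⟩
  have := Finset.card_le_card hsub
  rw [Finset.card_range] at this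
  unfold cnt; omega

lemma cnt_le (hN : IsPat m L C N) {r i j : ℕ} (hr : r < m) (h : j < N r i) :
    cnt m N i j ≤ r := by
  have hsub : ((range m).filter fun r' => N r' i ≤ j) ⊆ range r := by
    intro r' hr'
    rw [Finset.mem_filter, Finset.mem_range] at hr'
    rw [Finset.mem_range]
    by_contra hc
    push_neg at hc
    exact absurd (le_trans (hN.mono' i hc hr'.1) hr'.2) (by omega)
  have := Finset.card_le_card hsub
  rw [Finset.card_range] at this
  unfold cnt; omega

lemma chi (hN : IsPat m L C N) {r i j : ℕ} (hr : r < m) :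
    j < N r i ↔ cnt m N i j ≤ r := by
  constructor
  · exact cnt_le hN hr
  · intro h
    by_contra hc
    push_neg at hc
    exact absurd (lt_cnt hN hr hc) (by omega)

lemma cnt_lt_m (hN : IsPat m L C N) {i j : ℕ} (hi : i < m) (hj : j < L i) :
    cnt m N i j < m := by
  have hmem : m - 1 ∈ range m := by rw [mem_range]; omega
  have hnot : m - 1 ∉ (range m).filter fun r => N r i ≤ j := by
    rw [Finset.mem_filter]
    rintro ⟨-, hle⟩
    rw [hN.top i hi] at hle
    omega
  have hss : ((range m).filter fun r => N r i ≤ j) ⊂ range m :=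
    ⟨Finset.filter_subset _ _, fun hsub => hnot (hsub hmem)⟩
  have := Finset.card_lt_card hss
  rwa [Finset.card_range] at this

lemma psi_val (hN : IsPat m (tf m lam) C N) {i : Fin m} {j : ℕ} (hj : j < lam i) :
    (psi m lam N i j : ℕ) = cnt m N i.val j := by
  have h1 : cnt m N i.val j < m := cnt_lt_m hN i.isLt (by rw [tf_apply]; exact hj)
  simp [psi, hj, Nat.mod_eq_of_lt h1]

lemma psi_adj (hlam : Antitone lam) (hN : IsPat m (tf m lam) C N) (i i' : Fin m)
    (hvi : i.val + 1 = i'.val) {j : ℕ} (hj : j < lam i') :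
    psi m lam N i j < psi m lam N i' j := by
  have hii : i ≤ i' := by rw [Fin.le_def]; omega
  have hji : j < lam i := lt_of_lt_of_le hj (hlam hii)
  have hv := psi_val hN hji
  have hv' := psi_val (lam := lam) hN hj
  set v := cnt m N i.val j with hvdef
  have hvm : v < m := cnt_lt_m hN i.isLt (by rw [tf_apply]; exact hji)
  have key : N v i'.val ≤ j := by
    rcases Nat.eq_zero_or_pos v with h0 | hpos
    · rw [h0, hN.zero 0 i'.val (Or.inl (by omega))]
      exact Nat.zero_le j
    · have h2 := hN.inter (v - 1) i.val (by omega)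
      rw [show v - 1 + 1 = v from by omega, hvi] at h2
      have h3 : N (v - 1) i.val ≤ j := by
        by_contra hc; push_neg at hc
        have := (chi hN (show v - 1 < m by omega)).mp hc
        omega
      exact le_trans h2 h3
  have hfin : v < cnt m N i'.val j := by
    by_contra hc; push_neg at hc
    have := (chi hN hvm).mpr hc
    omega
  rw [Fin.lt_def, hv, hv']
  exact hfin

lemma psi_col (hlam : Antitone lam) (hN : IsPat m (tf m lam) C N) :
    ∀ (d : ℕ) (i i' : Fin m), i.val + d = i'.val → 0 < d →
      ∀ j, j < lam i' → psi m lam N i j < psi m lam N i' j := by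
  intro d
  induction d with
  | zero => intro i i' _ h0; omega
  | succ k ih =>
    intro i i' hd _ j hj
    rcases Nat.eq_zero_or_pos k with h0 | hk
    · exact psi_adj hlam hN i i' (by omega) hj
    · have hkm : i.val + k < m := by have := i'.isLt; omega
      set i'' : Fin m := ⟨i.val + k, hkm⟩ with hi''
      have hle : i'' ≤ i' := by rw [Fin.le_def]; simp only [hi'']; omega
      have h1 : psi m lam N i j < psi m lam N i'' j :=
        ih i i'' rfl hk j (lt_of_lt_of_le hj (hlam hle))
      have h2 : psi m lam N i'' j < psi m lam N i' j :=
        psi_adj hlam hN i'' i' (by simp only [hi'']; omega) hj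
      exact lt_trans h1 h2

lemma psi_isTC (hlam : Antitone lam) (hN : IsPat m (tf m lam) (cum m mu) N) :
    TC m lam mu (psi m lam N) := by
  refine ⟨?_, ?_, ?_, ?_⟩
  · intro i j j' hjj hj'
    have hj : j < lam i := by omega
    rw [Fin.le_def, psi_val hN hj, psi_val hN hj']
    apply Finset.card_le_card
    intro r' hr'
    rw [mem_filter] at hr' ⊢
    exact ⟨hr'.1, le_trans hr'.2 hjj⟩
  · intro i i' j hii hj
    have hv : i.val < i'.val := Fin.lt_def.mp hii
    exact psi_col hlam hN (i'.val - i.val) i i' (by omega) (by omega) j hj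
  · intro i j hj
    simp [psi, not_lt.2 hj]
  · intro r
    rw [card_cells lam (psi m lam N) r]
    have hrm : r.val < m := r.isLt
    have hstep : ∀ i : Fin m, ((range (lam i)).filter fun j => psi m lam N i j = r)
        = Finset.Ico (if r.val = 0 then 0 else N (r.val - 1) i.val) (N r.val i.val) := by
      intro i
      ext j
      rw [mem_filter, mem_range, Finset.mem_Ico]
      constructor
      · rintro ⟨hj, hpsi⟩
        have hv : (psi m lam N i j : ℕ) = cnt m N i.val j := psi_val hN hj
        have hc : cnt m N i.val j = r.val := by rw [← hv, hpsi]
        refine ⟨?_, (chi hN hrm).mpr (by omega)⟩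
        rcases Nat.eq_zero_or_pos r.val with h0 | hpos
        · simp [h0]
        · rw [if_neg (by omega)]
          by_contra hcc; push_neg at hcc
          have := (chi hN (show r.val - 1 < m by omega)).mp hcc
          omega
      · rintro ⟨hlb, hub⟩
        have hjl : j < lam i := lt_of_lt_of_le hub
          (by have := hN.le_L r.val i.val hrm; rwa [tf_apply] at this)
        refine ⟨hjl, ?_⟩
        apply Fin.ext
        rw [psi_val hN hjl]
        have h1 : cnt m N i.val j ≤ r.val := (chi hN hrm).mp hub
        have h2 : r.val ≤ cnt m N i.val j := by
          rcases Nat.eq_zero_or_pos r.val with h0 | hpos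
          · omega
          · rw [if_neg (by omega)] at hlb
            by_contra hcc; push_neg at hcc
            have hj2 : j < N (r.val - 1) i.val :=
              (chi hN (show r.val - 1 < m by omega)).mpr (by omega)
            omega
        omega
    rw [Finset.sum_congr rfl fun i _ => by rw [hstep i, Nat.card_Ico]]
    rw [Fin.sum_univ_eq_sum_range
      (fun k => N r.val k - (if r.val = 0 then 0 else N (r.val - 1) k)) m]
    rcases Nat.eq_zero_or_pos r.val with h0 | hpos
    · have hsum : ∀ k ∈ range m,
          N r.val k - (if r.val = 0 then 0 else N (r.val - 1) k) = N r.val k := by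
        intro k _; rw [if_pos h0]; omega
      rw [Finset.sum_congr rfl hsum, hN.rsum r.val hrm]
      unfold cum
      rw [h0, Finset.sum_range_one]
      have h0m : 0 < m := by omega
      rw [show r = ⟨0, h0m⟩ from Fin.ext (by simp [h0])]
      unfold tf
      rw [dif_pos h0m]
    · have hsum : ∀ k ∈ range m,
          N r.val k - (if r.val = 0 then 0 else N (r.val - 1) k)
            = N r.val k - N (r.val - 1) k := by
        intro k _; rw [if_neg (by omega)]
      rw [Finset.sum_congr rfl hsum]
      rw [sum_nat_sub _ _ _ (fun k _ => by
        have := hN.mono (r.val - 1) k (by omega)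
        rwa [show r.val - 1 + 1 = r.val from by omega] at this)]
      rw [hN.rsum r.val hrm, hN.rsum (r.val - 1) (by omega)]
      have hsucc : cum m mu r.val = cum m mu (r.val - 1) + tf m mu r.val := by
        unfold cum
        rw [show (r.val - 1) + 1 = r.val from by omega]
        exact Finset.sum_range_succ _ _
      have htf : tf m mu r.val = mu r := by simp [tf, hrm]
      omega

lemma psiphi (hlam : Antitone lam) (hT : TC m lam mu T) : psi m lam (phi m lam T) = T := by
  funext i j
  by_cases hj : j < lam i
  · have key : ((range m).filter fun r => phi m lam T r i.val ≤ j)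
        = range ((T i j : ℕ)) := by
      ext r
      rw [Finset.mem_filter, Finset.mem_range, Finset.mem_range]
      constructor
      · rintro ⟨hrm, hph⟩
        rw [phi_apply r hrm i] at hph
        by_contra hc; push_neg at hc
        have hsub : range (j + 1) ⊆ (range (lam i)).filter fun j' => (T i j' : ℕ) ≤ r := by
          intro j'' hj''
          rw [mem_range] at hj''
          rw [mem_filter, mem_range]
          have hj2 : j'' < lam i := by omega
          have := hT.1 i j'' j (by omega) hj
          rw [Fin.le_def] at this
          exact ⟨hj2, by omega⟩
        have := Finset.card_le_card hsub
        rw [Finset.card_range] at this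
        omega
      · intro hr
        have hrm : r < m := lt_trans hr (T i j).isLt
        refine ⟨hrm, ?_⟩
        rw [phi_apply r hrm i]
        have hsub : ((range (lam i)).filter fun j' => (T i j' : ℕ) ≤ r) ⊆ range j := by
          intro j' hj'
          rw [mem_filter, mem_range] at hj'
          rw [mem_range]
          by_contra hc; push_neg at hc
          have := hT.1 i j j' hc hj'.1
          rw [Fin.le_def] at this
          omega
        have := Finset.card_le_card hsub
        rwa [Finset.card_range] at this
    have hcnt : cnt m (phi m lam T) i.val j = (T i j : ℕ) := by
      unfold cnt; rw [key, Finset.card_range]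
    simp only [psi, if_pos hj]
    apply Fin.ext
    show cnt m (phi m lam T) i.val j % m = (T i j : ℕ)
    rw [hcnt]
    exact Nat.mod_eq_of_lt (T i j).isLt
  · simp only [psi, if_neg hj]
    apply Fin.ext
    show 0 = (T i j : ℕ)
    exact (hT.2.2.1 i j (by omega)).symm

lemma phipsi (hlam : Antitone lam) (hN : IsPat m (tf m lam) (cum m mu) N) :
    phi m lam (psi m lam N) = N := by
  funext r i
  by_cases h : i < m ∧ r < m
  · have e : phi m lam (psi m lam N) r i
        = ((range (lam ⟨i, h.1⟩)).filter
            fun j => ((psi m lam N ⟨i, h.1⟩ j : ℕ)) ≤ r).card :=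
      phi_apply r h.2 (⟨i, h.1⟩ : Fin m)
    rw [e]
    have hfe : ((range (lam ⟨i, h.1⟩)).filter fun j => ((psi m lam N ⟨i, h.1⟩ j : ℕ)) ≤ r)
        = range (N r i) := by
      ext j
      rw [mem_filter, mem_range, mem_range]
      constructor
      · rintro ⟨hj, hle⟩
        rw [psi_val hN hj] at hle
        exact (chi hN h.2).mpr hle
      · intro hj
        have hjl : j < lam ⟨i, h.1⟩ := lt_of_lt_of_le hj
          (by have := hN.le_L r i h.2
              rwa [show tf m lam i = lam ⟨i, h.1⟩ from by simp [tf, h.1]] at this)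
        refine ⟨hjl, ?_⟩
        rw [psi_val hN hjl]
        exact (chi hN h.2).mp hj
    rw [hfe, Finset.card_range]
  · rw [show phi m lam (psi m lam N) r i = 0 from by simp [phi, h]]
    rcases Nat.lt_or_ge i m with hi | hi
    · push_neg at h
      exact (hN.zero r i (Or.inr (h hi))).symm
    · exact (hN.zero_of_ge r i hi).symm

lemma E1 (hlam : Antitone lam) :
    kostkaFin m lam mu = patCard m (tf m lam) (cum m mu) := by
  apply Nat.card_congr
  exact { toFun := fun T => ⟨phi m lam T.1, phi_isPat hlam T.2⟩
          invFun := fun N => ⟨psi m lam N.1, psi_isTC hlam N.2⟩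
          left_inv := fun T => Subtype.ext (psiphi hlam T.2)
          right_inv := fun N => Subtype.ext (phipsi hlam N.2) }

end E1psi

/-! ### E2 : complementation of patterns -/

def hatL (m M : ℕ) (L : ℕ → ℕ) : ℕ → ℕ := fun i => if i < m then M - L (m - 1 - i) else 0
def hatC (M : ℕ) (C : ℕ → ℕ) : ℕ → ℕ := fun r => (r + 1) * M - C r
def hatN (m M : ℕ) (N : ℕ → ℕ → ℕ) : ℕ → ℕ → ℕ :=
  fun r i => if r < m ∧ i ≤ r then M - N r (r - i) else 0

section E2
variable {M : ℕ}

lemma hat_isPat (hm : 0 < m) (HL : ∀ i, L i ≤ M) (hN : IsPat m L C N) :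
    IsPat m (hatL m M L) (hatC M C) (hatN m M N) where
  zero := by
    intro r i h
    have hng : ¬(r < m ∧ i ≤ r) := by omega
    simp [hatN, hng]
  mono := by
    intro r i hr
    rcases Nat.lt_or_ge r i with h | h
    · have hng : ¬(r < m ∧ i ≤ r) := by omega
      simp [hatN, hng]
    · have g1 : r < m ∧ i ≤ r := ⟨by omega, h⟩
      have g2 : r + 1 < m ∧ i ≤ r + 1 := ⟨hr, by omega⟩
      simp only [hatN, if_pos g1, if_pos g2]
      apply Nat.sub_le_sub_left
      have := hN.inter r (r - i) hr
      rwa [show r - i + 1 = r + 1 - i from by omega] at this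
  inter := by
    intro r i hr
    rcases Nat.lt_or_ge r i with h | h
    · simp only [hatN]
      rw [if_neg (show ¬(r + 1 < m ∧ i + 1 ≤ r + 1) by omega)]
      exact Nat.zero_le _
    · have g1 : r + 1 < m ∧ i + 1 ≤ r + 1 := ⟨hr, by omega⟩
      have g2 : r < m ∧ i ≤ r := ⟨by omega, h⟩
      simp only [hatN, if_pos g1, if_pos g2]
      apply Nat.sub_le_sub_left
      have := hN.mono r (r - i) hr
      rwa [show r + 1 - (i + 1) = r - i from by omega]
  top := by
    intro i hi
    have g : m - 1 < m ∧ i ≤ m - 1 := ⟨by omega, by omega⟩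
    simp only [hatN, if_pos g, hatL, if_pos hi]
    rw [hN.top (m - 1 - i) (by omega)]
  rsum := by
    intro r hr
    have h1 : ∑ i ∈ range m, hatN m M N r i = ∑ i ∈ range (r + 1), hatN m M N r i := by
      symm
      apply Finset.sum_subset
      · intro x hx; rw [mem_range] at *; omega
      · intro x _ hx
        rw [mem_range] at hx
        have hng : ¬(r < m ∧ x ≤ r) := by omega
        simp [hatN, hng]
    have h2 : ∀ i ∈ range (r + 1), hatN m M N r i = M - N r (r - i) := by
      intro i hi; rw [mem_range] at hi
      simp [hatN, hr, show i ≤ r from by omega]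
    rw [h1, Finset.sum_congr rfl h2]
    have h4 := Finset.sum_range_reflect (fun k => M - N r k) (r + 1)
    simp only [Nat.add_sub_cancel] at h4
    rw [h4]
    rw [sum_nat_sub _ _ _ (fun k _ => le_trans (hN.le_L r k hr) (HL k))]
    rw [Finset.sum_const, Finset.card_range, smul_eq_mul]
    have h3 : ∑ k ∈ range (r + 1), N r k = ∑ k ∈ range m, N r k := by
      apply Finset.sum_subset
      · intro x hx; rw [mem_range] at *; omega
      · intro x _ hx; rw [mem_range] at hx; exact hN.zero r x (Or.inl (by omega))
    rw [h3, hN.rsum r hr]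
    rfl

lemma hat_invol (HL : ∀ i, L i ≤ M) (hN : IsPat m L C N) :
    hatN m M (hatN m M N) = N := by
  funext r i
  by_cases h : r < m ∧ i ≤ r
  · have g2 : r < m ∧ r - i ≤ r := ⟨h.1, by omega⟩
    simp only [hatN, if_pos h, if_pos g2]
    rw [show r - (r - i) = i from by omega]
    have hb : N r i ≤ M := le_trans (hN.le_L r i h.1) (HL i)
    omega
  · simp only [hatN, if_neg h]
    exact (hN.zero r i (by omega)).symm

lemma E2 (hm : 0 < m) (HL : ∀ i, L i ≤ M) (HC : ∀ r, r < m → C r ≤ (r + 1) * M) :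
    patCard m L C = patCard m (hatL m M L) (hatC M C) := by
  have HL' : ∀ i, hatL m M L i ≤ M := by
    intro i; unfold hatL; split <;> omega
  have eL : ∀ i, i < m → hatL m M (hatL m M L) i = L i := by
    intro i hi
    have h2 : m - 1 - i < m := by omega
    simp only [hatL, if_pos hi, if_pos h2]
    rw [show m - 1 - (m - 1 - i) = i from by omega]
    have := HL i; omega
  have eC : ∀ r, r < m → hatC M (hatC M C) r = C r := by
    intro r hr
    have := HC r hr
    simp only [hatC]
    omega
  apply Nat.card_congr
  exact { toFun := fun T => ⟨hatN m M T.1, hat_isPat hm HL T.2⟩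
          invFun := fun N' => ⟨hatN m M N'.1,
            isPat_congr eL eC (hat_isPat hm HL' N'.2)⟩
          left_inv := fun T => Subtype.ext (hat_invol HL T.2)
          right_inv := fun N' => Subtype.ext (hat_invol HL' N'.2) }

end E2

/-! ### E3 : Bender-Knuth toggles on patterns -/

def bprev (N : ℕ → ℕ → ℕ) (t i : ℕ) : ℕ := if t = 0 then 0 else N (t - 1) i
def bkUB (N : ℕ → ℕ → ℕ) (t i : ℕ) : ℕ :=
  if i = 0 then N (t + 1) 0 else min (N (t + 1) i) (bprev N t (i - 1))
def bkLB (N : ℕ → ℕ → ℕ) (t i : ℕ) : ℕ := max (N (t + 1) (i + 1)) (bprev N t i)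
def bk (t : ℕ) (N : ℕ → ℕ → ℕ) : ℕ → ℕ → ℕ :=
  fun r i => if r = t then bkUB N t i + bkLB N t i - N t i else N r i
def bkC (t : ℕ) (C : ℕ → ℕ) : ℕ → ℕ :=
  fun r => if r = t then C (t + 1) + (if t = 0 then 0 else C (t - 1)) - C t else C r

section E3
variable {t : ℕ}

lemma bk_lb (hN : IsPat m L C N) (ht : t + 1 < m) (i : ℕ) : bkLB N t i ≤ N t i := by
  rw [bkLB]; apply max_le
  · exact hN.inter t i ht
  · rw [bprev]; split
    · exact Nat.zero_le _
    · rename_i h0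
      have := hN.mono (t - 1) i (by omega)
      rwa [show t - 1 + 1 = t from by omega] at this

lemma bk_ub (hN : IsPat m L C N) (ht : t + 1 < m) (i : ℕ) : N t i ≤ bkUB N t i := by
  rcases Nat.eq_zero_or_pos i with h0 | hi
  · subst h0; rw [bkUB, if_pos rfl]; exact hN.mono t 0 ht
  · rw [bkUB, if_neg (by omega)]
    apply le_min
    · exact hN.mono t i ht
    · rw [bprev]
      rcases Nat.eq_zero_or_pos t with ht0 | htp
      · subst ht0
        rw [if_pos rfl, hN.zero 0 i (Or.inl (by omega))]
      · rw [if_neg (by omega)]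
        have := hN.inter (t - 1) (i - 1) (by omega)
        rwa [show t - 1 + 1 = t from by omega, show i - 1 + 1 = i from by omega] at this

lemma bk_ub_le (hN : IsPat m L C N) (ht : t + 1 < m) (i : ℕ) :
    bkUB N t i ≤ N (t + 1) i := by
  rcases Nat.eq_zero_or_pos i with h0 | hi
  · subst h0; rw [bkUB, if_pos rfl]
  · rw [bkUB, if_neg (by omega)]; exact min_le_left _ _

lemma bk_sumUL (hN : IsPat m L C N) (ht : t + 1 < m) :
    ∑ i ∈ range m, (bkUB N t i + bkLB N t i)
      = C (t + 1) + (if t = 0 then 0 else C (t - 1)) := by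
  have hmeq : m = (m - 1) + 1 := by omega
  have hblast : bprev N t (m - 1) = 0 := by
    rw [bprev]; split
    · rfl
    · exact hN.zero _ _ (Or.inl (by omega))
  have hsb : ∑ i ∈ range m, bprev N t i = (if t = 0 then 0 else C (t - 1)) := by
    rcases Nat.eq_zero_or_pos t with h0 | htp
    · subst h0; simp [bprev]
    · rw [if_neg (by omega)]
      have he : ∀ i ∈ range m, bprev N t i = N (t - 1) i := fun i _ => by
        rw [bprev, if_neg (by omega)]
      rw [Finset.sum_congr rfl he, hN.rsum (t - 1) (by omega)]
  have hsb2 : ∑ k ∈ range (m - 1), bprev N t k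
      = (if t = 0 then 0 else C (t - 1)) := by
    rw [← hsb]
    conv_rhs => rw [hmeq]
    rw [Finset.sum_range_succ, hblast, add_zero]
  have hU : ∑ i ∈ range m, bkUB N t i
      = (∑ k ∈ range (m - 1), min (N (t + 1) (k + 1)) (bprev N t k)) + N (t + 1) 0 := by
    conv_lhs => rw [hmeq]
    rw [Finset.sum_range_succ', show bkUB N t 0 = N (t + 1) 0 from rfl]
    congr 1
  have hL : ∑ i ∈ range m, bkLB N t i
      = ∑ k ∈ range (m - 1), max (N (t + 1) (k + 1)) (bprev N t k) := by
    conv_lhs => rw [hmeq]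
    rw [Finset.sum_range_succ]
    have hlast : bkLB N t (m - 1) = 0 := by
      rw [bkLB, hN.zero (t + 1) ((m - 1) + 1) (Or.inl (by omega)), hblast]
      exact Nat.max_self 0
    rw [hlast, add_zero]
    apply Finset.sum_congr rfl
    intro k _
    rw [bkLB]
  have hminmax : (∑ k ∈ range (m - 1), min (N (t + 1) (k + 1)) (bprev N t k))
      + ∑ k ∈ range (m - 1), max (N (t + 1) (k + 1)) (bprev N t k)
      = (∑ k ∈ range (m - 1), N (t + 1) (k + 1)) + ∑ k ∈ range (m - 1), bprev N t k := by
    rw [← Finset.sum_add_distrib, ← Finset.sum_add_distrib]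
    apply Finset.sum_congr rfl
    intro k _
    exact min_add_max _ _
  have ha : ∑ i ∈ range m, N (t + 1) i
      = (∑ k ∈ range (m - 1), N (t + 1) (k + 1)) + N (t + 1) 0 := by
    conv_lhs => rw [hmeq]
    rw [Finset.sum_range_succ']
  have hsa : ∑ i ∈ range m, N (t + 1) i = C (t + 1) := hN.rsum (t + 1) ht
  rw [Finset.sum_add_distrib, hU, hL]
  omega

lemma bk_isPat (hN : IsPat m L C N) (ht : t + 1 < m) :
    IsPat m L (bkC t C) (bk t N) where
  zero := by
    intro r i h
    by_cases hr : r = t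
    · rw [bk, if_pos hr]
      have hti : t < i := by omega
      have hU : bkUB N t i = 0 := by
        rw [bkUB, if_neg (by omega)]
        have hbp : bprev N t (i - 1) = 0 := by
          rw [bprev]; split
          · rfl
          · exact hN.zero _ _ (Or.inl (by omega))
        rw [hbp]
        exact Nat.min_eq_right (Nat.zero_le _)
      have hLb : bkLB N t i = 0 := by
        rw [bkLB, hN.zero (t + 1) (i + 1) (Or.inl (by omega))]
        have hbp : bprev N t i = 0 := by
          rw [bprev]; split
          · rfl
          · exact hN.zero _ _ (Or.inl (by omega))
        rw [hbp]
        exact Nat.max_self 0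
      rw [hU, hLb, hN.zero t i (Or.inl hti)]
    · rw [bk, if_neg hr]
      exact hN.zero r i h
  mono := by
    intro r i hr
    by_cases h1 : r = t
    · rw [h1]
      have e1 : bk t N (t + 1) i = N (t + 1) i := if_neg (by omega)
      have e2 : bk t N t i = bkUB N t i + bkLB N t i - N t i := if_pos rfl
      rw [e1, e2]
      have h3 := bk_lb hN ht i
      have h4 := bk_ub hN ht i
      have h5 := bk_ub_le hN ht i
      omega
    · by_cases h2 : r + 1 = t
      · have e1 : bk t N r i = N r i := if_neg h1
        have e2 : bk t N (r + 1) i = bkUB N t i + bkLB N t i - N t i := by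
          rw [bk, if_pos h2]
        rw [e1, e2]
        have h3 : N r i ≤ bkLB N t i := by
          rw [bkLB]
          refine le_trans ?_ (le_max_right _ _)
          rw [bprev, if_neg (by omega), show t - 1 = r from by omega]
        have h4 := bk_ub hN ht i
        omega
      · have e1 : bk t N r i = N r i := if_neg h1
        have e2 : bk t N (r + 1) i = N (r + 1) i := if_neg h2
        rw [e1, e2]
        exact hN.mono r i hr
  inter := by
    intro r i hr
    by_cases h2 : r + 1 = t
    · have e2 : bk t N (r + 1) (i + 1) = bkUB N t (i + 1) + bkLB N t (i + 1) - N t (i + 1) := by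
        rw [bk, if_pos h2]
      have e1 : bk t N r i = N r i := if_neg (by omega)
      rw [e1, e2]
      have h3 : bkUB N t (i + 1) ≤ N r i := by
        rw [bkUB, if_neg (by omega), Nat.add_sub_cancel, bprev, if_neg (by omega),
          show t - 1 = r from by omega]
        exact min_le_right _ _
      have h4 := bk_lb hN ht (i + 1)
      omega
    · by_cases h1 : r = t
      · rw [h1]
        have e2 : bk t N (t + 1) (i + 1) = N (t + 1) (i + 1) := if_neg (by omega)
        have e1 : bk t N t i = bkUB N t i + bkLB N t i - N t i := if_pos rfl
        rw [e1, e2]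
        have h3 : N (t + 1) (i + 1) ≤ bkLB N t i := by
          rw [bkLB]; exact le_max_left _ _
        have h4 := bk_ub hN ht i
        omega
      · have e1 : bk t N (r + 1) (i + 1) = N (r + 1) (i + 1) := if_neg h2
        have e2 : bk t N r i = N r i := if_neg h1
        rw [e1, e2]
        exact hN.inter r i hr
  top := by
    intro i hi
    rw [bk, if_neg (by omega)]
    exact hN.top i hi
  rsum := by
    intro r hr
    by_cases h1 : r = t
    · rw [h1]
      have he : ∀ i ∈ range m, bk t N t i = bkUB N t i + bkLB N t i - N t i :=
        fun i _ => if_pos rfl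
      rw [Finset.sum_congr rfl he]
      rw [sum_nat_sub _ _ _ (fun i _ => le_trans (bk_ub hN ht i) (Nat.le_add_right _ _))]
      rw [bk_sumUL hN ht, hN.rsum t (by omega)]
      simp [bkC]
    · have he : ∀ i ∈ range m, bk t N r i = N r i := fun i _ => if_neg h1
      rw [Finset.sum_congr rfl he, hN.rsum r hr]
      simp [bkC, h1]

lemma bk_invol (hN : IsPat m L C N) (ht : t + 1 < m) : bk t (bk t N) = N := by
  have hrow1 : bk t N (t + 1) = N (t + 1) := funext fun i => if_neg (by omega)
  have hrowp : ∀ i, bprev (bk t N) t i = bprev N t i := by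
    intro i
    rw [bprev, bprev]
    split
    · rfl
    · rename_i h0
      show bk t N (t - 1) i = N (t - 1) i
      rw [bk, if_neg (by omega)]
  have hUB : ∀ i, bkUB (bk t N) t i = bkUB N t i := by
    intro i
    rw [bkUB, bkUB, hrow1, hrowp]
  have hLB : ∀ i, bkLB (bk t N) t i = bkLB N t i := by
    intro i
    rw [bkLB, bkLB, hrow1, hrowp]
  funext r i
  by_cases h : r = t
  · rw [h]
    have e1 : bk t (bk t N) t i
        = bkUB (bk t N) t i + bkLB (bk t N) t i - bk t N t i := if_pos rfl
    have e2 : bk t N t i = bkUB N t i + bkLB N t i - N t i := if_pos rfl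
    rw [e1, hUB, hLB, e2]
    have h1 := bk_lb hN ht i
    have h2 := bk_ub hN ht i
    omega
  · have e1 : bk t (bk t N) r i = bk t N r i := if_neg h
    have e2 : bk t N r i = N r i := if_neg h
    rw [e1, e2]

lemma E3 (ht : t + 1 < m)
    (HCt : C t ≤ C (t + 1) + (if t = 0 then 0 else C (t - 1))) :
    patCard m L C = patCard m L (bkC t C) := by
  have heq : ∀ r, r < m → bkC t (bkC t C) r = C r := by
    intro r _
    by_cases h : r = t
    · rw [h]
      show (if t = t then bkC t C (t + 1) + (if t = 0 then 0 else bkC t C (t - 1))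
          - bkC t C t else bkC t C t) = C t
      rw [if_pos rfl]
      have e1 : bkC t C (t + 1) = C (t + 1) := if_neg (by omega)
      have e2 : bkC t C t = C (t + 1) + (if t = 0 then 0 else C (t - 1)) - C t := if_pos rfl
      have e3 : (if t = 0 then 0 else bkC t C (t - 1)) = (if t = 0 then 0 else C (t - 1)) := by
        rcases Nat.eq_zero_or_pos t with h0 | h0
        · rw [if_pos h0, if_pos h0]
        · rw [if_neg (by omega), if_neg (by omega)]
          exact if_neg (by omega)
      rw [e1, e2, e3]
      omega
    · rw [bkC]
      simp only [if_neg h]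
      rw [bkC]
      simp only [if_neg h]
  apply Nat.card_congr
  exact { toFun := fun T => ⟨bk t T.1, bk_isPat T.2 ht⟩
          invFun := fun N' => ⟨bk t N'.1,
            isPat_congr (fun _ _ => rfl) heq (bk_isPat N'.2 ht)⟩
          left_inv := fun T => Subtype.ext (bk_invol T.2 ht)
          right_inv := fun N' => Subtype.ext (bk_invol N'.2 ht) }

end E3

/-! ### Permutation invariance of content -/

section Perm

lemma tf_swap (a b : Fin m) (mu : Fin m → ℕ) (s : ℕ) :
    tf m (mu ∘ Equiv.swap a b) s = tf m mu (Equiv.swap a.val b.val s) := by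
  by_cases h1 : s = a.val
  · subst h1
    rw [Equiv.swap_apply_left, tf, tf, dif_pos a.isLt, dif_pos b.isLt]
    show mu (Equiv.swap a b ⟨a.val, a.isLt⟩) = mu ⟨b.val, b.isLt⟩
    rw [Fin.eta, Equiv.swap_apply_left, Fin.eta]
  · by_cases h2 : s = b.val
    · subst h2
      rw [Equiv.swap_apply_right, tf, tf, dif_pos b.isLt, dif_pos a.isLt]
      show mu (Equiv.swap a b ⟨b.val, b.isLt⟩) = mu ⟨a.val, a.isLt⟩
      rw [Fin.eta, Equiv.swap_apply_right, Fin.eta]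
    · rw [Equiv.swap_apply_of_ne_of_ne h1 h2]
      by_cases hs : s < m
      · rw [tf, tf, dif_pos hs, dif_pos hs]
        show mu (Equiv.swap a b ⟨s, hs⟩) = mu ⟨s, hs⟩
        rw [Equiv.swap_apply_of_ne_of_ne
          (fun hc => h1 (congrArg Fin.val hc)) (fun hc => h2 (congrArg Fin.val hc))]
      · rw [tf, tf, dif_neg hs, dif_neg hs]

lemma cum_swap_ne (a b : Fin m) (hab : a.val + 1 = b.val) (mu : Fin m → ℕ) (r : ℕ)
    (hr : r ≠ a.val) :
    cum m (mu ∘ Equiv.swap a b) r = cum m mu r := by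
  unfold cum
  refine Finset.sum_equiv (Equiv.swap a.val b.val) ?_ ?_
  · intro i
    rw [mem_range, mem_range]
    by_cases h1 : i = a.val
    · subst h1; rw [Equiv.swap_apply_left]; omega
    · by_cases h2 : i = b.val
      · subst h2; rw [Equiv.swap_apply_right]; omega
      · rw [Equiv.swap_apply_of_ne_of_ne h1 h2]
  · intro i _
    exact tf_swap a b mu i

lemma swap_adj (Lf : ℕ → ℕ) (mu : Fin m → ℕ) (a b : Fin m) (hab : a.val + 1 = b.val) :
    patCard m Lf (cum m (mu ∘ Equiv.swap a b)) = patCard m Lf (cum m mu) := by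
  have ht : a.val + 1 < m := by have := b.isLt; omega
  have hct : cum m mu a.val ≤ cum m mu (a.val + 1)
      + (if a.val = 0 then 0 else cum m mu (a.val - 1)) := by
    have h5 : cum m mu (a.val + 1) = cum m mu a.val + tf m mu (a.val + 1) :=
      Finset.sum_range_succ _ _
    exact le_trans (by omega) (Nat.le_add_right _ _)
  have hceq : ∀ r, r < m → cum m (mu ∘ Equiv.swap a b) r = bkC a.val (cum m mu) r := by
    intro r hr
    by_cases hrt : r = a.val
    · rw [hrt]
      have h1 : cum m (mu ∘ Equiv.swap a b) (a.val + 1)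
          = cum m (mu ∘ Equiv.swap a b) a.val + tf m (mu ∘ Equiv.swap a b) (a.val + 1) :=
        Finset.sum_range_succ _ _
      have h2 : cum m (mu ∘ Equiv.swap a b) (a.val + 1) = cum m mu (a.val + 1) :=
        cum_swap_ne a b hab mu (a.val + 1) (by omega)
      have h3 : tf m (mu ∘ Equiv.swap a b) (a.val + 1) = tf m mu a.val := by
        rw [tf_swap, show Equiv.swap a.val b.val (a.val + 1) = a.val from by
          rw [hab, Equiv.swap_apply_right]]
      have h4 : bkC a.val (cum m mu) a.val = cum m mu (a.val + 1)
          + (if a.val = 0 then 0 else cum m mu (a.val - 1)) - cum m mu a.val := if_pos rfl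
      have h5 : cum m mu (a.val + 1) = cum m mu a.val + tf m mu (a.val + 1) :=
        Finset.sum_range_succ _ _
      rcases Nat.eq_zero_or_pos a.val with h0 | hp
      · have h6 : cum m mu a.val = tf m mu a.val := by
          rw [h0]
          unfold cum
          rw [Finset.sum_range_one]
        rw [h4, if_pos h0]
        omega
      · have h7 : cum m mu a.val = cum m mu (a.val - 1) + tf m mu a.val := by
          unfold cum
          rw [show a.val - 1 + 1 = a.val from by omega]
          exact Finset.sum_range_succ _ _
        rw [h4, if_neg (by omega)]
        omega
    · rw [cum_swap_ne a b hab mu r hrt]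
      exact (if_neg hrt).symm
  calc patCard m Lf (cum m (mu ∘ Equiv.swap a b))
      = patCard m Lf (bkC a.val (cum m mu)) := patCard_congr (fun _ _ => rfl) hceq
    _ = patCard m Lf (cum m mu) := (E3 ht hct).symm

lemma swap_any (Lf : ℕ → ℕ) : ∀ (d : ℕ), ∀ (x y : Fin m), x.val + d = y.val → 0 < d →
    ∀ mu : Fin m → ℕ,
    patCard m Lf (cum m (mu ∘ Equiv.swap x y)) = patCard m Lf (cum m mu) := by
  intro d
  induction d with
  | zero => intro x y _ h0; omega
  | succ k ih =>
    intro x y hd _ mu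
    rcases Nat.eq_zero_or_pos k with h0 | hk
    · exact swap_adj Lf mu x y (by omega)
    · have hzm : x.val + k < m := by have := y.isLt; omega
      set z : Fin m := ⟨x.val + k, hzm⟩ with hz
      have hxz : x ≠ z := by
        intro hc
        have := congrArg Fin.val hc
        simp only [hz] at this
        omega
      have hxy : x ≠ y := by
        intro hc
        have := congrArg Fin.val hc
        omega
      have hsw : Equiv.swap z y * Equiv.swap x z * Equiv.swap z y = Equiv.swap x y := by
        rw [Equiv.swap_mul_swap_mul_swap hxz hxy, Equiv.swap_comm]
      have hcomp : mu ∘ ⇑(Equiv.swap x y)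
          = ((mu ∘ ⇑(Equiv.swap z y)) ∘ ⇑(Equiv.swap x z)) ∘ ⇑(Equiv.swap z y) := by
        rw [← hsw]
        funext u
        simp [Equiv.Perm.coe_mul]
      rw [hcomp]
      rw [swap_adj Lf ((mu ∘ ⇑(Equiv.swap z y)) ∘ ⇑(Equiv.swap x z)) z y
        (show z.val + 1 = y.val from by simp only [hz]; omega)]
      rw [ih x z (show x.val + k = z.val from by simp only [hz]) hk (mu ∘ ⇑(Equiv.swap z y))]
      exact swap_adj Lf mu z y (show z.val + 1 = y.val from by simp only [hz]; omega)

lemma perm_inv (Lf : ℕ → ℕ) (σ : Equiv.Perm (Fin m)) (mu : Fin m → ℕ) :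
    patCard m Lf (cum m (mu ∘ σ)) = patCard m Lf (cum m mu) := by
  have main : ∀ ν : Fin m → ℕ,
      patCard m Lf (cum m (ν ∘ σ)) = patCard m Lf (cum m ν) := by
    refine Equiv.Perm.swap_induction_on σ ?_ ?_
    · intro ν
      have h : ν ∘ ⇑(1 : Equiv.Perm (Fin m)) = ν := by
        funext u; simp
      rw [h]
    · intro f x y hxy hf ν
      have hco : ν ∘ ⇑(Equiv.swap x y * f) = (ν ∘ ⇑(Equiv.swap x y)) ∘ ⇑f := by
        funext u; simp [Equiv.Perm.coe_mul]
      rw [hco, hf (ν ∘ ⇑(Equiv.swap x y))]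
      rcases Nat.lt_trichotomy x.val y.val with h | h | h
      · exact swap_any Lf (y.val - x.val) x y (by omega) (by omega) ν
      · exact absurd (Fin.ext h) hxy
      · rw [Equiv.swap_comm]
        exact swap_any Lf (x.val - y.val) y x (by omega) (by omega) ν
  exact main mu

end Perm


end KC

/-- complementation symmetry of Kostka numbers. For partitions `λ, μ`
with at most `m` parts and `M ≥ max(λ_1, μ_1)`, with `λ̂ = (M - λ_m, …, M - λ_1)` and
`μ̂ = (M - μ_m, …, M - μ_1)`, one has `K_{λ,μ} = K_{λ̂,μ̂}`. -/
theorem kostka_complement_symmetry (m : ℕ) (hm : 0 < m) (lam mu : Fin m → ℕ)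
    (hlam : Antitone lam) (hmu : Antitone mu) (M : ℕ)
    (hMl : lam ⟨0, hm⟩ ≤ M) (hMm : mu ⟨0, hm⟩ ≤ M) :
    kostkaFin m lam mu =
      kostkaFin m (fun i => M - lam i.rev) (fun i => M - mu i.rev) := by
  classical
  set lamh : Fin m → ℕ := fun i => M - lam i.rev with hlamh
  set muh : Fin m → ℕ := fun i => M - mu i.rev with hmuh
  have hlam0 : ∀ i : Fin m, lam i ≤ M :=
    fun i => le_trans (hlam (Fin.le_def.mpr (Nat.zero_le _))) hMl
  have hmu0 : ∀ i : Fin m, mu i ≤ M :=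
    fun i => le_trans (hmu (Fin.le_def.mpr (Nat.zero_le _))) hMm
  have hlamh_anti : Antitone lamh := by
    intro i j hij
    simp only [hlamh]
    have hrev : j.rev ≤ i.rev := by
      rw [Fin.le_def, Fin.val_rev, Fin.val_rev]
      have := Fin.le_def.mp hij
      omega
    have := hlam hrev
    omega
  have h1 : kostkaFin m lam mu = KC.patCard m (KC.tf m lam) (KC.cum m mu) := KC.E1 hlam
  have h2 : kostkaFin m lamh muh = KC.patCard m (KC.tf m lamh) (KC.cum m muh) :=
    KC.E1 hlamh_anti
  have HL : ∀ i, KC.tf m lam i ≤ M := by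
    intro i; unfold KC.tf; split
    · exact hlam0 _
    · exact Nat.zero_le M
  have HC : ∀ r, r < m → KC.cum m mu r ≤ (r + 1) * M := by
    intro r hr
    unfold KC.cum
    calc ∑ s ∈ range (r + 1), KC.tf m mu s ≤ ∑ _s ∈ range (r + 1), M :=
          Finset.sum_le_sum (fun s _ => by
            unfold KC.tf; split
            · exact hmu0 _
            · exact Nat.zero_le M)
      _ = (r + 1) * M := by rw [Finset.sum_const, Finset.card_range, smul_eq_mul]
  have h3 : KC.patCard m (KC.tf m lam) (KC.cum m mu)
      = KC.patCard m (KC.hatL m M (KC.tf m lam)) (KC.hatC M (KC.cum m mu)) :=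
    KC.E2 hm HL HC
  have h4 : KC.patCard m (KC.tf m lamh) (KC.cum m (muh ∘ ⇑(Fin.revPerm)))
      = KC.patCard m (KC.tf m lamh) (KC.cum m muh) :=
    KC.perm_inv (KC.tf m lamh) Fin.revPerm muh
  have h5 : ∀ i, i < m → KC.hatL m M (KC.tf m lam) i = KC.tf m lamh i := by
    intro i hi
    have e1 : KC.hatL m M (KC.tf m lam) i = M - KC.tf m lam (m - 1 - i) := if_pos hi
    have e2 : KC.tf m lam (m - 1 - i) = lam ⟨m - 1 - i, by omega⟩ :=
      dif_pos (show m - 1 - i < m by omega)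
    have e3 : KC.tf m lamh i = lamh ⟨i, hi⟩ := dif_pos hi
    rw [e1, e2, e3]
    simp only [hlamh]
    have hfe : (⟨m - 1 - i, show m - 1 - i < m by omega⟩ : Fin m) = (⟨i, hi⟩ : Fin m).rev := by
      apply Fin.ext
      rw [Fin.val_rev]
      show m - 1 - i = m - (i + 1)
      omega
    rw [hfe]
  have h6 : ∀ r, r < m → KC.hatC M (KC.cum m mu) r = KC.cum m (muh ∘ ⇑(Fin.revPerm)) r := by
    intro r hr
    have hterm : ∀ s ∈ range (r + 1), KC.tf m (muh ∘ ⇑(Fin.revPerm)) s = M - KC.tf m mu s := by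
      intro s hs
      rw [mem_range] at hs
      have hsm : s < m := by omega
      show (if h : s < m then (muh ∘ ⇑(Fin.revPerm)) ⟨s, h⟩ else 0)
          = M - (if h : s < m then mu ⟨s, h⟩ else 0)
      rw [dif_pos hsm, dif_pos hsm]
      show muh ((⟨s, hsm⟩ : Fin m).rev) = M - mu ⟨s, hsm⟩
      simp only [hmuh]
      rw [Fin.rev_rev]
    show (r + 1) * M - KC.cum m mu r = KC.cum m (muh ∘ ⇑(Fin.revPerm)) r
    unfold KC.cum
    rw [Finset.sum_congr rfl hterm, KC.sum_nat_sub _ _ _ (fun s hs => by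
      unfold KC.tf; split
      · exact hmu0 _
      · exact Nat.zero_le M)]
    rw [Finset.sum_const, Finset.card_range, smul_eq_mul]
  calc kostkaFin m lam mu = KC.patCard m (KC.tf m lam) (KC.cum m mu) := h1
    _ = KC.patCard m (KC.hatL m M (KC.tf m lam)) (KC.hatC M (KC.cum m mu)) := h3
    _ = KC.patCard m (KC.tf m lamh) (KC.cum m (muh ∘ ⇑(Fin.revPerm))) :=
        KC.patCard_congr h5 h6
    _ = KC.patCard m (KC.tf m lamh) (KC.cum m muh) := h4
    _ = kostkaFin m lamh muh := h2.symm
end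

section
/- Let n ≥ 2 and consider the type-C_n crystal B_1 = {1 < 2 < … < n < n̄ < … < 2̄ < 1̄} of the vector representation, with crystal operators f̃_i(i)=i+1, f̃_i(i+1 with bar conventions)=ī for 1≤i≤n−1 (f̃_i sends i↦i+1 and (i+1)‾↦ī), and f̃_n(n)=n̄. Let m ≤ n and let b = x_1 ⊗ … ⊗ x_m ∈ B_1^{⊗m} be a highest weight vertex (ε_i(b) = 0 for all 1 ≤ i ≤ n). Then every letter x_j lies in the set {1, 2, …, m, (m−1)‾, (m−2)‾, …, 1̄}. -/
/-- The letters `1,…,n,n̄,…,1̄` of the type `C_n` (or `D_n`) vector representation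
crystal: `Sum.inl j` is the unbarred letter `j+1`, `Sum.inr j` the barred letter
`(j+1)‾` (0-indexed). -/
abbrev CLetter (n : ℕ) := Fin n ⊕ Fin n

/-- `ε_i` on letters for the type `C_n` crystal `B_1` (colors `i = c+1`, `c : Fin n`):
`ε_i(i+1) = 1`, `ε_i(ī) = 1` for `i ≤ n-1`, `ε_n(n̄) = 1`, all others `0`. -/
def epsL (n : ℕ) (c : Fin n) : CLetter n → ℕ
  | Sum.inl j => if (j : ℕ) = (c : ℕ) + 1 then 1 else 0
  | Sum.inr j => if (j : ℕ) = (c : ℕ) then 1 else 0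

/-- `φ_i` on letters: `φ_i(i) = 1`, `φ_i((i+1)‾) = 1` for `i ≤ n-1`, `φ_n(n) = 1`. -/
def phiL (n : ℕ) (c : Fin n) : CLetter n → ℕ
  | Sum.inl j => if (j : ℕ) = (c : ℕ) then 1 else 0
  | Sum.inr j => if (j : ℕ) = (c : ℕ) + 1 then 1 else 0

/-- `ε_i` of a tensor product of letters (leftmost factor first), by the tensor rule
`ε_i(b ⊗ w) = ε_i(b) + max(0, ε_i(w) - φ_i(b))` (truncated subtraction). -/
def epsW (n : ℕ) (c : Fin n) : List (CLetter n) → ℕ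
  | [] => 0
  | x :: w => epsL n c x + (epsW n c w - phiL n c x)

/-- Position of a letter in the type `C_n` total order `1 < ⋯ < n < n̄ < ⋯ < 1̄`. -/
def toC (n : ℕ) : CLetter n → ℕ
  | Sum.inl j => (j : ℕ)
  | Sum.inr j => 2 * n - 1 - (j : ℕ)

/-- The weight of a letter: `wt(i) = ε_i`, `wt(ī) = -ε_i`. -/
def wtL (n : ℕ) : CLetter n → Fin n → ℤ
  | Sum.inl j => fun x => if x = j then 1 else 0
  | Sum.inr j => fun x => if x = j then -1 else 0

/-!
Assign to each letter its level: `j` for the unbarred letter `j+1` and `j+1` for the barred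
letter `(j+1)‾` (0-indexed as in `CLetter`). Every letter other than `1` has some `ε_i = 1`, and
in a highest weight word such a letter must be preceded by a letter with `φ_i = 1`, whose level is
at least one less. By induction on the position, a letter in position `p` (counted from `0`) of a
highest weight word has level at most `p`, so all levels in a word of length `m` are below `m`.
-/

def level (n : ℕ) : CLetter n → ℕ
  | Sum.inl j => j
  | Sum.inr j => j + 1

lemma exists_epsL_ne_zero {n : ℕ} {x : CLetter n} (hx : level n x ≠ 0) :
    ∃ c : Fin n, epsL n c x ≠ 0 := by
  rcases x with j | j
  · exact ⟨⟨j - 1, by omega⟩, by simp only [level] at hx; simp [epsL]; omega⟩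
  · exact ⟨j, by simp [epsL]⟩

lemma level_le_succ_of_epsL_of_phiL {n : ℕ} {c : Fin n} {x y : CLetter n}
    (hx : epsL n c x ≠ 0) (hy : phiL n c y ≠ 0) : level n x ≤ level n y + 1 := by
  rcases x with j | j <;> rcases y with k | k <;>
    simp only [epsL, phiL, level, ne_eq, ite_eq_right_iff, one_ne_zero, imp_false,
      not_not] at hx hy ⊢ <;> omega

lemma epsW_le_epsW_append {n : ℕ} {c : Fin n} {u : List (CLetter n)}
    (hu : ∀ y ∈ u, phiL n c y = 0) (v : List (CLetter n)) : epsW n c v ≤ epsW n c (u ++ v) := by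
  induction u with
  | nil => simp
  | cons y u ih =>
    have hy : phiL n c y = 0 := hu y List.mem_cons_self
    have ih := ih fun z hz => hu z (List.mem_cons_of_mem y hz)
    simp only [List.cons_append, epsW]
    omega

lemma exists_phiL_ne_zero_of_epsW_eq_zero {n : ℕ} {c : Fin n} {u v : List (CLetter n)}
    {x : CLetter n} (h : epsW n c (u ++ x :: v) = 0) (hx : epsL n c x ≠ 0) :
    ∃ y ∈ u, phiL n c y ≠ 0 := by
  by_contra! hu
  have hle := epsW_le_epsW_append hu (x :: v)
  simp only [epsW] at hle
  omega

lemma level_le_length_of_eq_append {n : ℕ} {w : List (CLetter n)}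
    (hw : ∀ c : Fin n, epsW n c w = 0) (u : List (CLetter n)) (x : CLetter n)
    (v : List (CLetter n)) (hwx : w = u ++ x :: v) : level n x ≤ u.length := by
  by_cases hx0 : level n x = 0
  · omega
  obtain ⟨c, hc⟩ := exists_epsL_ne_zero hx0
  obtain ⟨y, hyu, hy⟩ := exists_phiL_ne_zero_of_epsW_eq_zero (hwx ▸ hw c) hc
  obtain ⟨u₁, u₂, hu⟩ := List.mem_iff_append.mp hyu
  have hy_le := level_le_length_of_eq_append hw u₁ y (u₂ ++ x :: v) (by simp [hwx, hu])
  have hxy := level_le_succ_of_epsL_of_phiL hc hy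
  have hlen : u.length = u₁.length + u₂.length + 1 := by simp [hu]; omega
  omega
termination_by u.length
decreasing_by simp [hu]

theorem highest_weight_letters_bounded_general (n m : ℕ)
    (w : List (CLetter n)) (hlen : w.length = m)
    (hw : ∀ c : Fin n, epsW n c w = 0) :
    ∀ x ∈ w, (∀ j : Fin n, x = Sum.inl j → (j : ℕ) < m) ∧
      (∀ j : Fin n, x = Sum.inr j → (j : ℕ) + 1 < m) := by
  intro x hx
  obtain ⟨u, v, hwx⟩ := List.mem_iff_append.mp hx
  have hlevel : level n x < m := by
    have hx_le := level_le_length_of_eq_append hw u x v hwx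
    have hw_len : w.length = u.length + v.length + 1 := by simp [hwx]; omega
    omega
  exact ⟨fun j hj => by subst hj; exact hlevel, fun j hj => by subst hj; exact hlevel⟩

/-- Lemma 25: every letter of a highest weight vertex of the type `C_n`
crystal `B_1^{⊗m}` (`m ≤ n`) lies in `{1, …, m, (m-1)‾, …, 1̄}`. -/
theorem highest_weight_letters_bounded (n m : ℕ) (hm : m ≤ n)
    (w : List (CLetter n)) (hlen : w.length = m)
    (hw : ∀ c : Fin n, epsW n c w = 0) :
    ∀ x ∈ w, (∀ j : Fin n, x = Sum.inl j → (j : ℕ) < m) ∧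
      (∀ j : Fin n, x = Sum.inr j → (j : ℕ) + 1 < m) :=
  highest_weight_letters_bounded_general n m w hlen hw
end

section
/- Let b = x_1 ⊗ … ⊗ x_m be a highest weight vertex of the type-C_n crystal B_1^{⊗m} (m ≤ n) of weight λ (a partition, where wt(i)=ε_i, wt(ī)=−ε_i). Let Z_b = {i ∈ {1,…,m−1} : exactly one of x_i, x_{i+1} is barred}, and for x,y ∈ B_1 set h̄(x⊗y) = 0 if x ≥ y in the total order 1<2<…<n<n̄<…<1̄, and h̄(x⊗y)=1 if x < y. Then Σ_{i ∈ Z_b} (m−i)(−1 + 2 h̄(x_i ⊗ x_{i+1})) = (m − |λ|)/2, where |λ| = Σ_j λ_j. -/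
/-- `h̄(x ⊗ y)`: `0` if `x ≥ y` in the type `C_n` total order, `1` if `x < y`. -/
def hbar (n : ℕ) (x y : CLetter n) : ℤ := if toC n x < toC n y then 1 else 0

/-- Indicator (as an integer) that the `j`-th letter of `w` is barred. -/
def barInd (m n : ℕ) (w : Fin m → CLetter n) (j : ℕ) : ℤ :=
  if h : j < m then (if (w ⟨j, h⟩).isRight then 1 else 0) else 0

/-- Abel/telescoping summation. -/
lemma tele_sum (g : ℕ → ℤ) (k : ℕ) :
    ∑ i ∈ Finset.range k, ((k : ℤ) - i) * (g (i + 1) - g i)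
      = (∑ j ∈ Finset.range (k + 1), g j) - (k + 1) * g 0 := by
  induction k with
  | zero => simp
  | succ k ih =>
    have h1 : ∑ i ∈ Finset.range (k + 1), (((k : ℤ) + 1) - i) * (g (i + 1) - g i)
        = (∑ i ∈ Finset.range (k + 1), ((k : ℤ) - i) * (g (i + 1) - g i))
          + ∑ i ∈ Finset.range (k + 1), (g (i + 1) - g i) := by
      rw [← Finset.sum_add_distrib]
      exact Finset.sum_congr rfl fun i _ => by ring
    have h2 : ∑ i ∈ Finset.range (k + 1), (g (i + 1) - g i) = g (k + 1) - g 0 :=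
      Finset.sum_range_sub g (k + 1)
    have h3 : ∑ i ∈ Finset.range (k + 1), ((k : ℤ) - i) * (g (i + 1) - g i)
        = ∑ i ∈ Finset.range k, ((k : ℤ) - i) * (g (i + 1) - g i) := by
      rw [Finset.sum_range_succ]
      simp
    rw [Finset.sum_range_succ (f := g)]
    push_cast
    rw [h1, h3, ih, h2]
    ring

/-- Lemma 38: for a type `C_n` highest weight vertex
`b = x_1 ⊗ ⋯ ⊗ x_m` of weight `λ` (`m ≤ n`), with
`Z_b = {i : exactly one of x_i, x_{i+1} is barred}`,
`Σ_{i ∈ Z_b} (m-i)(-1 + 2h̄(x_i ⊗ x_{i+1})) = (m - |λ|)/2`. -/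
theorem sum_over_Zb (n m : ℕ) (hm : m ≤ n) (w : Fin m → CLetter n)
    (hw : ∀ c : Fin n, epsW n c (List.ofFn w) = 0)
    (lam : Fin n → ℤ) (hlam : ∀ x : Fin n, lam x = ∑ j : Fin m, wtL n (w j) x) :
    2 * (∑ i : Fin (m - 1),
        if (w (i.castLE (by omega))).isRight ≠ (w ⟨(i : ℕ) + 1, by omega⟩).isRight
        then ((m : ℤ) - ((i : ℕ) + 1)) *
          (-1 + 2 * hbar n (w (i.castLE (by omega))) (w ⟨(i : ℕ) + 1, by omega⟩))
        else 0) =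
      (m : ℤ) - ∑ x : Fin n, lam x := by
  rcases m with _ | M
  · simp [hlam]
  -- the first letter is unbarred
  have h0 : (w 0).isRight = false := by
    cases hx : w 0 with
    | inl a => rfl
    | inr a =>
      exfalso
      have h := hw a
      rw [List.ofFn_succ] at h
      simp only [epsW] at h
      rw [hx] at h
      simp [epsL] at h
  -- the barred-letter count
  set B : ℤ := ∑ i : Fin (M + 1), (if (w i).isRight then 1 else 0) with hB
  have hg0 : barInd (M + 1) n w 0 = 0 := by
    have e : (⟨0, Nat.succ_pos M⟩ : Fin (M + 1)) = 0 := by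
      apply Fin.ext; simp
    simp [barInd, e, h0]
  have hsum : ∑ j ∈ Finset.range (M + 1), barInd (M + 1) n w j = B := by
    rw [hB, ← Fin.sum_univ_eq_sum_range (fun j => barInd (M + 1) n w j) (M + 1)]
    refine Finset.sum_congr rfl fun i _ => ?_
    simp [barInd, i.isLt, Fin.eta]
  have hlamsum : ∑ x : Fin n, lam x = ((M : ℤ) + 1) - 2 * B := by
    have : ∑ x : Fin n, lam x = ∑ j : Fin (M + 1), ∑ x : Fin n, wtL n (w j) x := by
      simp only [hlam]
      rw [Finset.sum_comm]
    rw [this]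
    have hterm : ∀ j : Fin (M + 1),
        ∑ x : Fin n, wtL n (w j) x = 1 - 2 * (if (w j).isRight then 1 else 0) := by
      intro j
      cases hx : w j with
      | inl a => simp [wtL]
      | inr a => simp [wtL]
    rw [Finset.sum_congr rfl fun j _ => hterm j]
    rw [Finset.sum_sub_distrib, ← Finset.mul_sum, hB]
    simp [mul_comm]
  have main : 2 * (∑ i : Fin M,
      ((M : ℤ) - (i : ℕ)) * (barInd (M + 1) n w ((i : ℕ) + 1) - barInd (M + 1) n w (i : ℕ)))
      = ((M + 1 : ℕ) : ℤ) - ∑ x : Fin n, lam x := by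
    rw [Fin.sum_univ_eq_sum_range
      (fun j => ((M : ℤ) - j) * (barInd (M + 1) n w (j + 1) - barInd (M + 1) n w j)) M]
    rw [tele_sum (barInd (M + 1) n w) M, hsum, hg0, hlamsum]
    push_cast
    ring
  rw [← main]
  congr 1
  refine Finset.sum_congr rfl fun i _ => ?_
  have hi0 : (i : ℕ) < M + 1 := by omega
  have hi1 : (i : ℕ) + 1 < M + 1 := by omega
  have ec : ∀ h, (i.castLE h : Fin (M + 1)) = ⟨(i : ℕ), hi0⟩ := fun _ => rfl
  simp only [barInd, ec]
  rw [dif_pos hi1, dif_pos hi0]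
  rcases hx : w ⟨(i : ℕ), hi0⟩ with a | a <;> rcases hy : w ⟨(i : ℕ) + 1, hi1⟩ with b | b
  · simp
  · have ha := a.isLt
    have hb := b.isLt
    have hh : hbar n (Sum.inl a) (Sum.inr b) = 1 := by
      simp only [hbar, toC]
      exact if_pos (by omega)
    simp only [hh, Sum.isRight, ne_eq, Bool.false_eq_true, Bool.true_eq_false]
    simp only [if_neg (by simp : ¬False), not_false_eq_true, if_true, if_pos]
    norm_num
  · have ha := a.isLt
    have hb := b.isLt
    have hh : hbar n (Sum.inr a) (Sum.inl b) = 0 := by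
      simp only [hbar, toC]
      exact if_neg (by omega)
    simp only [hh, Sum.isRight, ne_eq, Bool.true_eq_false]
    norm_num
  · simp
end

section
/- Let x, y be letters of the type-A crystal B_1^{A} = {1 < 2 < … < n}, and define the local coenergy H̄^A(x ⊗ y) = 0 if x ≥ y and 1 if x < y. For a word b = x_1 ⊗ … ⊗ x_m ∈ (B_1^A)^{⊗m}, let D̄^A(b) = Σ_{i=1}^{m−1} (m−i) H̄^A(x_i ⊗ x_{i+1}). Then D̄^A is constant on the connected components of the A_{n−1}-crystal (B_1^A)^{⊗m}, i.e., D̄^A(ẽ_i(b)) = D̄^A(b) whenever ẽ_i(b) ≠ 0, for all 1 ≤ i ≤ n−1. -/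
/-- `ε_i` on letters of the type `A_{n-1}` vector crystal `B_1^A = {1 < ⋯ < n}`
(colors `i = c+1` for `c : Fin (n-1)`): `ε_i(i+1) = 1`, else `0`. -/
def epsLA (n : ℕ) (c : Fin (n - 1)) (x : Fin n) : ℕ :=
  if (x : ℕ) = (c : ℕ) + 1 then 1 else 0

/-- `φ_i` on letters: `φ_i(i) = 1`, else `0`. -/
def phiLA (n : ℕ) (c : Fin (n - 1)) (x : Fin n) : ℕ :=
  if (x : ℕ) = (c : ℕ) then 1 else 0

/-- The raising operator `ẽ_i` on letters: `i+1 ↦ i`, else `0`. -/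
def eLA (n : ℕ) (c : Fin (n - 1)) (x : Fin n) : Option (Fin n) :=
  if (x : ℕ) = (c : ℕ) + 1 then
    some ⟨(c : ℕ), lt_of_lt_of_le c.isLt (Nat.sub_le n 1)⟩ else none

/-- `ε_i` of a word (tensor product of letters, leftmost factor first). -/
def epsWA (n : ℕ) (c : Fin (n - 1)) : List (Fin n) → ℕ
  | [] => 0
  | x :: w => epsLA n c x + (epsWA n c w - phiLA n c x)

/-- The raising operator `ẽ_i` on words by the tensor rule:
`ẽ_i(b ⊗ w) = ẽ_i(b) ⊗ w` if `φ_i(b) ≥ ε_i(w)`, and `b ⊗ ẽ_i(w)` otherwise. -/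
def eWA (n : ℕ) (c : Fin (n - 1)) : List (Fin n) → Option (List (Fin n))
  | [] => none
  | x :: w =>
    if epsWA n c w ≤ phiLA n c x then (eLA n c x).map (· :: w)
    else (eWA n c w).map (x :: ·)

/-- The local coenergy `H̄^A(x ⊗ y)`: `0` if `x ≥ y`, `1` if `x < y`. -/
def HA (n : ℕ) (x y : Fin n) : ℕ := if x < y then 1 else 0

/-- `D̄^A(x_1 ⊗ ⋯ ⊗ x_m) = Σ_{i=1}^{m-1} (m-i) H̄^A(x_i ⊗ x_{i+1})`. -/
def DA (n : ℕ) : List (Fin n) → ℕ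
  | [] => 0
  | [_] => 0
  | x :: y :: w => (w.length + 1) * HA n x y + DA n (y :: w)

/-!
`ẽ_i` lowers a single letter `i+1` to `i`, and lowering a letter by one changes its comparison
with a neighbour only if that neighbour is the new value `i` (on the left) or the old value `i+1`
(on the right). The signature rule excludes both: when `ẽ_i` acts on the head of `x ⊗ w` we have
`ε_i(w) = 0`, so `w` does not start with `i+1`; when it acts inside `w` at the head of `w` we have
`ε_i(w) = 1 > φ_i(x)`, so `x ≠ i`. Hence every `H̄^A` term, and with it `D̄^A`, is unchanged.
-/

section Crystal

variable {n : ℕ} {c : Fin (n - 1)}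

lemma HA_eq_of_val_eq_succ_left {x a y : Fin n} (hx : (x : ℕ) = a + 1) (hy : y ≠ x) :
    HA n x y = HA n a y := by
  have hy' : (y : ℕ) ≠ x := Fin.val_ne_of_ne hy
  simp only [HA, Fin.lt_def]
  split_ifs <;> omega

lemma HA_eq_of_val_eq_succ_right {x y a : Fin n} (hy : (y : ℕ) = a + 1) (hx : x ≠ a) :
    HA n x y = HA n x a := by
  have hx' : (x : ℕ) ≠ a := Fin.val_ne_of_ne hx
  simp only [HA, Fin.lt_def]
  split_ifs <;> omega

lemma DA_cons (x : Fin n) (w : List (Fin n)) :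
    DA n (x :: w) = w.length * (w.head?.map (HA n x)).getD 0 + DA n w := by
  cases w <;> simp [DA]

lemma DA_cons_congr {x x' : Fin n} {w w' : List (Fin n)} (hlen : w.length = w'.length)
    (hD : DA n w = DA n w') (hH : w.head?.map (HA n x) = w'.head?.map (HA n x')) :
    DA n (x :: w) = DA n (x' :: w') := by
  rw [DA_cons, DA_cons, hlen, hD, hH]

lemma eLA_eq_some {x a : Fin n} (h : eLA n c x = some a) :
    (x : ℕ) = c + 1 ∧ (a : ℕ) = c := by
  unfold eLA at h
  split_ifs at h with hx
  cases h
  exact ⟨hx, rfl⟩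

lemma eWA_cons_eq_some {x : Fin n} {w l' : List (Fin n)} (h : eWA n c (x :: w) = some l') :
    (∃ a : Fin n, (x : ℕ) = c + 1 ∧ (a : ℕ) = c ∧ epsWA n c w = 0 ∧ l' = a :: w) ∨
      (phiLA n c x < epsWA n c w ∧ ∃ w', eWA n c w = some w' ∧ l' = x :: w') := by
  rw [eWA] at h
  split_ifs at h with hle
  · obtain ⟨a, ha, rfl⟩ := Option.map_eq_some_iff.1 h
    obtain ⟨hx, ha⟩ := eLA_eq_some ha
    have hphi : phiLA n c x = 0 := by simp [phiLA, hx]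
    exact .inl ⟨a, hx, ha, by omega, rfl⟩
  · obtain ⟨w', hw', rfl⟩ := Option.map_eq_some_iff.1 h
    exact .inr ⟨by omega, w', hw', rfl⟩

lemma eWA_length {w w' : List (Fin n)} (h : eWA n c w = some w') : w'.length = w.length := by
  induction w generalizing w' with
  | nil => simp [eWA] at h
  | cons x w ih =>
    rcases eWA_cons_eq_some h with ⟨a, -, -, -, rfl⟩ | ⟨-, w', hw', rfl⟩
    · rfl
    · simp [ih hw']

lemma head?_map_HA_eq_of_epsWA_eq_zero {x a : Fin n} {w : List (Fin n)}
    (hx : (x : ℕ) = c + 1) (ha : (a : ℕ) = c) (hw : epsWA n c w = 0) :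
    w.head?.map (HA n x) = w.head?.map (HA n a) := by
  cases w with
  | nil => rfl
  | cons y v =>
    have hy : (y : ℕ) ≠ c + 1 := fun hy => by simp [epsWA, epsLA, hy] at hw
    simp only [List.head?_cons, Option.map_some, Option.some.injEq]
    exact HA_eq_of_val_eq_succ_left (by omega) (fun hyx => hy (hyx ▸ hx))

lemma head?_map_HA_eq_of_eWA_eq_some {x : Fin n} {w w' : List (Fin n)}
    (hlt : phiLA n c x < epsWA n c w) (h : eWA n c w = some w') :
    w.head?.map (HA n x) = w'.head?.map (HA n x) := by
  cases w with
  | nil => simp [eWA] at h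
  | cons y v =>
    rcases eWA_cons_eq_some h with ⟨a, hy, ha, hv, rfl⟩ | ⟨-, v', -, rfl⟩
    · have hphi : phiLA n c x = 0 := by
        simp only [epsWA, epsLA, hy, hv, if_true] at hlt
        omega
      have hxa : x ≠ a := fun hxa => by simp [phiLA, hxa, ha] at hphi
      simp only [List.head?_cons, Option.map_some, Option.some.injEq]
      exact HA_eq_of_val_eq_succ_right (by omega) hxa
    · rfl

end Crystal

/-- the coenergy `D̄^A` is constant on connected components of the
`A_{n-1}`-crystal `(B_1^A)^{⊗ m}`: it is unchanged by every raising operator `ẽ_i`. -/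
theorem DA_invariant_under_e (n : ℕ) (c : Fin (n - 1))
    (l l' : List (Fin n)) (h : eWA n c l = some l') :
    DA n l = DA n l' := by
  induction l generalizing l' with
  | nil => simp [eWA] at h
  | cons x w ih =>
    rcases eWA_cons_eq_some h with ⟨a, hx, ha, hw, rfl⟩ | ⟨hlt, w', hw', rfl⟩
    · exact DA_cons_congr rfl rfl (head?_map_HA_eq_of_epsWA_eq_zero hx ha hw)
    · exact DA_cons_congr (eWA_length hw').symm (ih w' hw')
        (head?_map_HA_eq_of_eWA_eq_some hlt hw')
end

section
/- In the type-C_n crystal B_l ⊗ B_k (l ≥ k ≥ 0), where B_s is the crystal of highest weight sω_1 realized as weakly decreasing words of length s in the alphabet 1<…<n<n̄<…<1̄, the highest weight vertices are exactly the elements v_{l,k;a,b} = 1^l ⊗ 1̄^a 2^b 1^{k−a−b} for integers a, b ≥ 0 with a + b ≤ k (and a+b ≤ l, automatic since l ≥ k). In particular B_l ⊗ B_k is multiplicity-free as a C_n-crystal: its decomposition into irreducible components has all multiplicities equal to 1, and the component containing v_{l,k;a,b} has highest weight (l + k − 2a − b) ω_1 + b ω_2. -/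
/-- A weakly decreasing word in the type `C_n` order (an element of the one-row
crystal `B_s ≅ B(sω_1)`). -/
def DecWord (n s : ℕ) (f : Fin s → CLetter n) : Prop :=
  ∀ j j' : Fin s, j ≤ j' → toC n (f j') ≤ toC n (f j)

/-- The weakly decreasing word `1̄^a 2^b 1^{k-a-b}` of length `k`. -/
def vWord (n k a b : ℕ) (hn : 2 ≤ n) : Fin k → CLetter n := fun j =>
  if (j : ℕ) < a then Sum.inr ⟨0, by omega⟩
  else if (j : ℕ) < a + b then Sum.inl ⟨1, by omega⟩
  else Sum.inl ⟨0, by omega⟩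

/- ### Auxiliary lemmas -/

lemma toC_le' {n : ℕ} (x : CLetter n) : toC n x ≤ 2 * n - 1 := by
  cases x with
  | inl j => have := j.isLt; simp only [toC]; omega
  | inr j => have := j.isLt; simp only [toC]; omega

lemma toC_inj' {n : ℕ} {x y : CLetter n} (h : toC n x = toC n y) : x = y := by
  cases x with
  | inl j =>
    cases y with
    | inl j' => simp only [toC] at h; exact congrArg _ (Fin.ext h)
    | inr j' =>
      exfalso; have := j.isLt; have := j'.isLt; simp only [toC] at h; omega
  | inr j =>
    cases y with
    | inl j' =>
      exfalso; have := j.isLt; have := j'.isLt; simp only [toC] at h; omega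
    | inr j' =>
      have := j.isLt; have := j'.isLt; simp only [toC] at h
      exact congrArg _ (Fin.ext (by omega))

lemma epsW_cons {n : ℕ} (c : Fin n) (x : CLetter n) (w : List (CLetter n)) :
    epsW n c (x :: w) = epsL n c x + (epsW n c w - phiL n c x) := rfl

lemma epsL_or_phiL {n : ℕ} (c : Fin n) (x : CLetter n) :
    epsL n c x = 0 ∨ phiL n c x = 0 := by
  cases x <;> simp only [epsL, phiL] <;> split_ifs <;> omega

lemma epsW_replicate_append {n : ℕ} (c : Fin n) (x : CLetter n) (m : ℕ)
    (w : List (CLetter n)) :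
    epsW n c (List.replicate m x ++ w) =
      m * epsL n c x + (epsW n c w - m * phiL n c x) := by
  induction m with
  | zero => simp
  | succ m ih =>
    rw [List.replicate_succ, List.cons_append, epsW_cons, ih]
    rcases epsL_or_phiL c x with h | h <;>
      simp [h, Nat.succ_mul, Nat.sub_sub] <;> ring

lemma epsW_replicate {n : ℕ} (c : Fin n) (x : CLetter n) (m : ℕ) :
    epsW n c (List.replicate m x) = m * epsL n c x := by
  have := epsW_replicate_append c x m []
  simpa [epsW] using this

lemma eps_prefix {n : ℕ} (c : Fin n) :
    ∀ (w : List (CLetter n)), epsW n c w = 0 →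
    ∀ (i : ℕ) (hi : i < w.length),
      (∀ (i' : ℕ) (hi' : i' < i), phiL n c (w[i']'(by omega)) = 0) →
      epsL n c (w[i]'hi) = 0 := by
  intro w
  induction w with
  | nil => intro _ i hi; simp at hi
  | cons x w ih =>
    intro h i hi hpre
    rw [epsW_cons] at h
    match i with
    | 0 => simpa using (by omega : epsL n c x = 0)
    | i + 1 =>
      have hx : phiL n c x = 0 := by simpa using hpre 0 (by omega)
      have hw : epsW n c w = 0 := by omega
      have := ih hw i (by simpa using hi)
        (fun i' hi' => by simpa using hpre (i' + 1) (by omega))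
      simpa using this

lemma mem_iff_lt_card {k : ℕ} (S : Finset (Fin k))
    (hdc : ∀ i j : Fin k, i ≤ j → j ∈ S → i ∈ S) (j : Fin k) :
    j ∈ S ↔ (j : ℕ) < S.card := by
  constructor
  · intro hj
    have h1 : Finset.Iic j ⊆ S := fun i hi => hdc i j (Finset.mem_Iic.mp hi) hj
    have := Finset.card_le_card h1
    simp at this
    omega
  · intro hj
    by_contra hjS
    have h1 : S ⊆ Finset.Iio j := by
      intro i hi
      rw [Finset.mem_Iio]
      by_contra hij
      exact hjS (hdc j i (le_of_not_gt hij) hi)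
    have := Finset.card_le_card h1
    simp at this
    omega

lemma ofFn_vWord (n k a b : ℕ) (hn : 2 ≤ n) (hab : a + b ≤ k) :
    List.ofFn (vWord n k a b hn) =
      List.replicate a (Sum.inr ⟨0, by omega⟩) ++
        (List.replicate b (Sum.inl ⟨1, by omega⟩) ++
          List.replicate (k - a - b) (Sum.inl ⟨0, by omega⟩)) := by
  apply List.ext_getElem
  · simp; omega
  · intro i h1 h2
    rw [List.getElem_ofFn]
    simp only [List.getElem_append, List.getElem_replicate, List.length_replicate,
      List.length_append, List.length_ofFn] at h1 ⊢
    simp only [vWord]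
    split_ifs <;> simp_all <;> omega

lemma sum_wt_const (n l : ℕ) (hn : 2 ≤ n) (x : Fin n) :
    ∑ _j : Fin l, wtL n (Sum.inl ⟨0, by omega⟩) x = if (x : ℕ) = 0 then (l : ℤ) else 0 := by
  rw [Finset.sum_const, Finset.card_univ, Fintype.card_fin]
  simp only [wtL, Fin.ext_iff]
  split_ifs <;> simp_all

lemma sum_wt_vWord (n k a b : ℕ) (hn : 2 ≤ n) (hab : a + b ≤ k) (x : Fin n) :
    ∑ j : Fin k, wtL n (vWord n k a b hn j) x =
      if (x : ℕ) = 0 then (k : ℤ) - 2 * a - b else if (x : ℕ) = 1 then (b : ℤ) else 0 := by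
  classical
  set F : ℕ → ℤ := fun i => if i < a then (if (x : ℕ) = 0 then (-1 : ℤ) else 0)
      else if i < a + b then (if (x : ℕ) = 1 then (1 : ℤ) else 0)
      else (if (x : ℕ) = 0 then (1 : ℤ) else 0) with hFdef
  have h1 : ∀ j : Fin k, wtL n (vWord n k a b hn j) x = F (j : ℕ) := by
    intro j
    simp only [hFdef, vWord]
    split_ifs <;> simp_all [wtL, Fin.ext_iff]
  have h2 : ∑ j : Fin k, wtL n (vWord n k a b hn j) x = ∑ i ∈ Finset.range k, F i := by
    rw [← Fin.sum_univ_eq_sum_range F k]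
    exact Finset.sum_congr rfl (fun j _ => h1 j)
  rw [h2, Finset.range_eq_Ico,
    ← Finset.sum_Ico_consecutive _ (Nat.zero_le a) (show a ≤ k by omega),
    ← Finset.sum_Ico_consecutive _ (show a ≤ a + b by omega) (show a + b ≤ k by omega)]
  have e1 : ∀ i ∈ Finset.Ico 0 a, F i = (if (x : ℕ) = 0 then (-1 : ℤ) else 0) := by
    intro i hi; rw [Finset.mem_Ico] at hi; simp only [hFdef]; rw [if_pos hi.2]
  have e2 : ∀ i ∈ Finset.Ico a (a + b), F i = (if (x : ℕ) = 1 then (1 : ℤ) else 0) := by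
    intro i hi; rw [Finset.mem_Ico] at hi; simp only [hFdef]
    rw [if_neg (by omega), if_pos hi.2]
  have e3 : ∀ i ∈ Finset.Ico (a + b) k, F i = (if (x : ℕ) = 0 then (1 : ℤ) else 0) := by
    intro i hi; rw [Finset.mem_Ico] at hi; simp only [hFdef]
    rw [if_neg (by omega), if_neg (by omega)]
  rw [Finset.sum_congr rfl e1, Finset.sum_congr rfl e2, Finset.sum_congr rfl e3,
    Finset.sum_const, Finset.sum_const, Finset.sum_const, Nat.card_Ico, Nat.card_Ico,
    Nat.card_Ico]
  split_ifs <;> simp [nsmul_eq_mul] <;> push_cast <;> omega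

/-- in the type `C_n` crystal `B_l ⊗ B_k` (`l ≥ k ≥ 0`, `n ≥ 2`), the
highest weight vertices are exactly `v_{l,k;a,b} = 1^l ⊗ 1̄^a 2^b 1^{k-a-b}` for
`a, b ≥ 0` with `a + b ≤ k`; the vertex `v_{l,k;a,b}` has weight
`(l+k-2a-b)ω_1 + bω_2 = (l+k-2a-b, b, 0, …, 0)`, and distinct such vertices have
distinct weights, so `B_l ⊗ B_k` is multiplicity-free. -/
theorem Bl_tensor_Bk_highest_weight_vertices (n l k : ℕ) (hn : 2 ≤ n) (hlk : k ≤ l) :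
    (∀ (f : Fin l → CLetter n) (g : Fin k → CLetter n),
      (DecWord n l f ∧ DecWord n k g ∧
        ∀ c : Fin n, epsW n c (List.ofFn f ++ List.ofFn g) = 0) ↔
      ∃ a b : ℕ, a + b ≤ k ∧
        f = (fun _ => Sum.inl ⟨0, by omega⟩) ∧ g = vWord n k a b hn) ∧
    (∀ a b : ℕ, a + b ≤ k → ∀ x : Fin n,
      ((∑ j : Fin l, wtL n (Sum.inl ⟨0, by omega⟩) x) +
        ∑ j : Fin k, wtL n (vWord n k a b hn j) x) =
      if (x : ℕ) = 0 then (l : ℤ) + k - 2 * a - b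
      else if (x : ℕ) = 1 then (b : ℤ) else 0) ∧
    (∀ a b a' b' : ℕ, a + b ≤ k → a' + b' ≤ k →
      (∀ x : Fin n,
        (∑ j : Fin k, wtL n (vWord n k a b hn j) x) =
          ∑ j : Fin k, wtL n (vWord n k a' b' hn j) x) →
      a = a' ∧ b = b') := by
  refine ⟨?_, ?_, ?_⟩
  · -- part 1
    intro f g
    constructor
    · rintro ⟨hf, hg, he⟩
      rcases Nat.eq_zero_or_pos l with hl | hl
      · subst hl
        have hk : k = 0 := Nat.le_zero.mp hlk
        subst hk
        exact ⟨0, 0, le_refl 0, funext (fun j => j.elim0), funext (fun j => j.elim0)⟩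
      · have hlen : (List.ofFn f ++ List.ofFn g).length = l + k := by simp
        have hWf : ∀ (i : ℕ) (h : i < l),
            (List.ofFn f ++ List.ofFn g)[i]'(by omega) = f ⟨i, h⟩ := by
          intro i h
          rw [List.getElem_append_left (by simpa using h)]
          exact List.getElem_ofFn _
        have hWg : ∀ (i : ℕ) (hli : l ≤ i) (h : i < l + k),
            (List.ofFn f ++ List.ofFn g)[i]'(by omega) = g ⟨i - l, by omega⟩ := by
          intro i hli h
          rw [List.getElem_append_right (by simp; omega)]
          simp
        -- the first letter of f is 1
        have hf0 : f ⟨0, hl⟩ = Sum.inl ⟨0, by omega⟩ := by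
          have hε : ∀ c : Fin n, epsL n c (f ⟨0, hl⟩) = 0 := by
            intro c
            have := eps_prefix c (List.ofFn f ++ List.ofFn g) (he c) 0 (by omega)
              (fun i' hi' => absurd hi' (Nat.not_lt_zero i'))
            rwa [hWf 0 hl] at this
          cases hx : f ⟨0, hl⟩ with
          | inl j =>
            rcases Nat.eq_zero_or_pos j.val with h0 | h0
            · exact congrArg _ (Fin.ext h0)
            · exfalso
              have hj := j.isLt
              have := hε ⟨j.val - 1, by omega⟩
              rw [hx] at this
              simp only [epsL, Fin.val_mk] at this
              split_ifs at this <;> omega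
          | inr j =>
            exfalso
            have := hε ⟨j.val, j.isLt⟩
            rw [hx] at this
            simp only [epsL, Fin.val_mk] at this
            split_ifs at this <;> omega
        -- all letters of f are 1
        have hfall : ∀ j : Fin l, f j = Sum.inl ⟨0, by omega⟩ := by
          intro j
          have hle := hf ⟨0, hl⟩ j (Nat.zero_le _)
          rw [hf0] at hle
          have h0 : toC n (f j) = 0 := Nat.le_zero.mp hle
          cases hx : f j with
          | inl m =>
            rw [hx] at h0
            exact congrArg _ (Fin.ext h0)
          | inr m =>
            exfalso
            rw [hx] at h0
            have := m.isLt
            simp only [toC] at h0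
            omega
        -- key: letters of g with free prefix of φ's
        have hkey : ∀ (c : Fin n) (j : Fin k),
            (∀ j' : Fin k, (j' : ℕ) < (j : ℕ) → phiL n c (g j') = 0) →
            (0 : ℕ) ≠ (c : ℕ) → epsL n c (g j) = 0 := by
          intro c j hpre hc
          have hjk := j.isLt
          have := eps_prefix c (List.ofFn f ++ List.ofFn g) (he c) (l + (j : ℕ)) (by omega) ?_
          · rw [hWg (l + (j : ℕ)) (by omega) (by omega)] at this
            have hje : (⟨l + (j : ℕ) - l, by omega⟩ : Fin k) = j := Fin.ext (by simp)
            rwa [hje] at this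
          · intro i' hi'
            rcases Nat.lt_or_ge i' l with hi | hi
            · rw [hWf i' hi, hfall ⟨i', hi⟩]
              simp only [phiL, Fin.val_mk]
              rw [if_neg hc]
            · rw [hWg i' hi (by omega)]
              exact hpre ⟨i' - l, by omega⟩ (by simp; omega)
        -- no barred letter other than 1̄ appears in g
        have hg_inr : ∀ (j : Fin k) (m : Fin n), g j = Sum.inr m → (m : ℕ) = 0 := by
          intro j m hm
          by_contra hm0
          have hmlt := m.isLt
          have := hkey m j ?_ (by omega)
          · rw [hm] at this
            simp only [epsL] at this
            split_ifs at this <;> omega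
          · intro j' hj'
            have hto := hg j' j (Nat.le_of_lt hj')
            rw [hm] at hto
            cases hz : g j' with
            | inl m2 =>
              rw [hz] at hto
              have := m2.isLt
              simp only [toC] at hto
              simp only [phiL]
              split_ifs with h <;> omega
            | inr m2 =>
              rw [hz] at hto
              have := m2.isLt
              simp only [toC] at hto
              simp only [phiL]
              split_ifs with h <;> omega
        -- no unbarred letter other than 1, 2 appears in g
        have hg_inl : ∀ (j : Fin k) (m : Fin n), g j = Sum.inl m → (m : ℕ) ≤ 1 := by
          intro j m hm
          by_contra h2
          have hmlt := m.isLt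
          have := hkey ⟨(m : ℕ) - 1, by omega⟩ j ?_ (by simp; omega)
          · rw [hm] at this
            simp only [epsL, Fin.val_mk] at this
            split_ifs at this <;> omega
          · intro j' hj'
            have hto := hg j' j (Nat.le_of_lt hj')
            rw [hm] at hto
            simp only [toC] at hto
            cases hz : g j' with
            | inl m2 =>
              rw [hz] at hto
              simp only [toC] at hto
              simp only [phiL, Fin.val_mk]
              split_ifs with h <;> omega
            | inr m2 =>
              have hz0 := hg_inr j' m2 hz
              simp only [phiL, Fin.val_mk]
              split_ifs with h <;> omega
        classical
        set A : Finset (Fin k) :=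
          Finset.univ.filter (fun j => g j = Sum.inr (⟨0, by omega⟩ : Fin n)) with hAdef
        set AB : Finset (Fin k) := Finset.univ.filter (fun j => 1 ≤ toC n (g j)) with hABdef
        have hAsub : A ⊆ AB := by
          intro j hj
          rw [hAdef, Finset.mem_filter] at hj
          rw [hABdef, Finset.mem_filter]
          refine ⟨Finset.mem_univ _, ?_⟩
          rw [hj.2]
          simp only [toC, Fin.val_mk]
          omega
        have hAdc : ∀ i j : Fin k, i ≤ j → j ∈ A → i ∈ A := by
          intro i j hij hj
          rw [hAdef, Finset.mem_filter] at hj ⊢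
          refine ⟨Finset.mem_univ _, ?_⟩
          have hto := hg i j hij
          rw [hj.2] at hto
          have hle := toC_le' (g i)
          apply toC_inj'
          have hv : toC n (Sum.inr (⟨0, by omega⟩ : Fin n)) = 2 * n - 1 := by
            simp [toC]
          omega
        have hABdc : ∀ i j : Fin k, i ≤ j → j ∈ AB → i ∈ AB := by
          intro i j hij hj
          rw [hABdef, Finset.mem_filter] at hj ⊢
          refine ⟨Finset.mem_univ _, ?_⟩
          have hto := hg i j hij
          omega
        have hAmem := mem_iff_lt_card A hAdc
        have hABmem := mem_iff_lt_card AB hABdc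
        have hcard : A.card ≤ AB.card := Finset.card_le_card hAsub
        have hABk : AB.card ≤ k := by
          have := Finset.card_le_univ AB
          simpa using this
        refine ⟨A.card, AB.card - A.card, by omega, funext hfall, funext ?_⟩
        intro j
        simp only [vWord]
        rcases Nat.lt_or_ge (j : ℕ) A.card with hja | hja
        · rw [if_pos hja]
          have := (hAmem j).mpr hja
          rw [hAdef, Finset.mem_filter] at this
          exact this.2
        · rw [if_neg (by omega)]
          have hjA : j ∉ A := fun h => by have := (hAmem j).mp h; omega
          rcases Nat.lt_or_ge (j : ℕ) AB.card with hjab | hjab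
          · rw [if_pos (by omega)]
            have hjAB := (hABmem j).mpr hjab
            rw [hABdef, Finset.mem_filter] at hjAB
            cases hz : g j with
            | inl m =>
              have hm1 := hg_inl j m hz
              rw [hz] at hjAB
              simp only [toC] at hjAB
              have hval : (m : ℕ) = 1 := by omega
              exact congrArg _ (Fin.ext hval)
            | inr m =>
              exfalso
              have hm0 := hg_inr j m hz
              apply hjA
              rw [hAdef, Finset.mem_filter]
              exact ⟨Finset.mem_univ _, by rw [hz]; exact congrArg _ (Fin.ext hm0)⟩
          · rw [if_neg (by omega)]
            have hjAB : j ∉ AB := fun h => by have := (hABmem j).mp h; omega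
            rw [hABdef, Finset.mem_filter] at hjAB
            push_neg at hjAB
            have hto := hjAB (Finset.mem_univ _)
            cases hz : g j with
            | inl m =>
              rw [hz] at hto
              simp only [toC] at hto
              have hval : (m : ℕ) = 0 := by omega
              exact congrArg _ (Fin.ext hval)
            | inr m =>
              exfalso
              have := m.isLt
              rw [hz] at hto
              simp only [toC] at hto
              omega
    · rintro ⟨a, b, hab, hfe, hge⟩
      subst hfe hge
      refine ⟨?_, ?_, ?_⟩
      · intro j j' hjj
        simp [toC]
      · intro j j' hjj
        rw [Fin.le_def] at hjj
        simp only [vWord]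
        split_ifs <;> simp only [toC, Fin.val_mk] <;> omega
      · intro c
        rw [List.ofFn_const, ofFn_vWord n k a b hn hab,
          epsW_replicate_append, epsW_replicate_append, epsW_replicate_append,
          epsW_replicate]
        simp only [epsL, phiL, Fin.val_mk]
        split_ifs <;> first | exact ‹False›.elim | omega
  · -- part 2
    intro a b hab x
    rw [sum_wt_const n l hn x, sum_wt_vWord n k a b hn hab x]
    split_ifs <;> push_cast <;> omega
  · -- part 3
    intro a b a' b' hab hab' hw
    have h0 := (sum_wt_vWord n k a b hn hab ⟨0, by omega⟩).symm.trans
      ((hw ⟨0, by omega⟩).trans (sum_wt_vWord n k a' b' hn hab' ⟨0, by omega⟩))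
    have h1 := (sum_wt_vWord n k a b hn hab ⟨1, by omega⟩).symm.trans
      ((hw ⟨1, by omega⟩).trans (sum_wt_vWord n k a' b' hn hab' ⟨1, by omega⟩))
    simp at h0 h1
    constructor <;> omega
end

section
/- The number of highest weight vertices of the type-C_n crystal B_l ⊗ B_k (l ≥ k, n ≥ 2) equals (k+1)(k+2)/2, i.e., the number of pairs (a,b) of nonnegative integers with a + b ≤ k. -/
/-! ### Auxiliary lemmas -/

lemma phiL_le_one (n : ℕ) (c : Fin n) (x : CLetter n) : phiL n c x ≤ 1 := by
  cases x <;> simp only [phiL] <;> split <;> omega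

lemma le_epsW_append (n : ℕ) (c : Fin n) (u v : List (CLetter n)) :
    epsW n c v ≤ epsW n c (u ++ v) + (u.map (phiL n c)).sum := by
  induction u with
  | nil => simp [epsW]
  | cons x u ih =>
    simp only [List.cons_append, epsW, List.map_cons, List.sum_cons, List.append_eq]
    omega

lemma epsW_le_append (n : ℕ) (c : Fin n) (u v : List (CLetter n)) :
    epsW n c u ≤ epsW n c (u ++ v) := by
  induction u with
  | nil => simp [epsW]
  | cons x u ih =>
    simp only [List.cons_append, epsW, List.append_eq]
    omega

/-- Key structural lemma: in a weakly decreasing word with `ε_c = 0`, every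
occurrence of a letter with `ε_c = 1` is preceded by a (weakly larger) letter
with `φ_c = 1`. -/
lemma exists_phi (n : ℕ) (c : Fin n) :
    ∀ w : List (CLetter n), w.Pairwise (fun x y => toC n y ≤ toC n x) →
      epsW n c w = 0 → ∀ y ∈ w, epsL n c y = 1 →
      ∃ x ∈ w, phiL n c x = 1 ∧ toC n y ≤ toC n x := by
  intro w
  induction w with
  | nil => simp
  | cons z t ih =>
    intro hp h0 y hy hε
    simp only [epsW] at h0
    have hz : epsL n c z = 0 := by omega
    have ht : epsW n c t ≤ phiL n c z := by omega
    rcases List.mem_cons.1 hy with rfl | hyt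
    · omega
    · by_cases hz1 : phiL n c z = 1
      · exact ⟨z, List.mem_cons_self, hz1, (List.pairwise_cons.1 hp).1 y hyt⟩
      · have hz0 : phiL n c z = 0 := by have := phiL_le_one n c z; omega
        have h0' : epsW n c t = 0 := by omega
        obtain ⟨x, hx, h1, h2⟩ := ih (List.pairwise_cons.1 hp).2 h0' y hyt hε
        exact ⟨x, List.mem_cons_of_mem _ hx, h1, h2⟩

lemma epsW_all_zero (n : ℕ) (c : Fin n) (w : List (CLetter n))
    (h : ∀ x ∈ w, epsL n c x = 0) : epsW n c w = 0 := by
  induction w with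
  | nil => rfl
  | cons x w ih =>
    simp only [epsW]
    have h1 := h x List.mem_cons_self
    have h2 : epsW n c w = 0 := ih fun y hy => h y (List.mem_cons_of_mem _ hy)
    omega

lemma epsW_rep_cons (n : ℕ) (c : Fin n) (x : CLetter n) (m : ℕ) (t : List (CLetter n))
    (hε : epsL n c x = 1) (hφ : phiL n c x = 0) :
    epsW n c (List.replicate m x ++ t) = m + epsW n c t := by
  induction m with
  | zero => simp
  | succ m ih =>
    simp only [List.replicate_succ, List.cons_append, epsW, List.append_eq, ih, hε, hφ]
    omega

lemma epsW_rep_one (n : ℕ) (c : Fin n) (h0 : 0 < n) (m : ℕ) (t : List (CLetter n)) :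
    epsW n c (List.replicate m (Sum.inl ⟨0, h0⟩) ++ t)
      = epsW n c t - (if (c : ℕ) = 0 then m else 0) := by
  induction m with
  | zero => simp
  | succ m ih =>
    simp only [List.replicate_succ, List.cons_append, epsW, List.append_eq, ih]
    have h1 : epsL n c (Sum.inl (⟨0, h0⟩ : Fin n)) = 0 := by
      simp only [epsL]; split <;> omega
    have h2 : phiL n c (Sum.inl (⟨0, h0⟩ : Fin n)) = if (c : ℕ) = 0 then 1 else 0 := by
      simp only [phiL]
      split <;> split <;> omega
    rw [h1, h2]
    split <;> omega

lemma of_ite_one {P : Prop} [Decidable P] (h : (if P then (1:ℕ) else 0) = 1) : P := by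
  by_contra hP; simp [hP] at h

/-- No barred letter other than `1̄` occurs in a weakly decreasing word all of whose
`ε_c`, `c ≠ 0`, vanish. -/
lemma no_barred (n : ℕ) (w : List (CLetter n))
    (hw : w.Pairwise (fun x y => toC n y ≤ toC n x))
    (h0 : ∀ c : Fin n, (c : ℕ) ≠ 0 → epsW n c w = 0) :
    ∀ y ∈ w, ∀ m : Fin n, y = Sum.inr m → (m : ℕ) = 0 := by
  rintro y hy m rfl
  by_contra hm
  set c : Fin n := ⟨m, m.isLt⟩ with hc
  have hε : epsL n c (Sum.inr m) = 1 := by simp [epsL, hc]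
  obtain ⟨x, hx, hφ, hle⟩ := exists_phi n c w hw (h0 c hm) (Sum.inr m) hy hε
  have hmn := m.isLt
  rcases x with j | j
  · have hj : (j : ℕ) = (m : ℕ) := by
      simp only [phiL] at hφ; exact of_ite_one hφ
    simp only [toC] at hle
    omega
  · have hj : (j : ℕ) = (m : ℕ) + 1 := by
      simp only [phiL] at hφ; exact of_ite_one hφ
    have hjn := j.isLt
    simp only [toC] at hle
    omega

/-- No unbarred letter other than `1, 2` occurs in a weakly decreasing word all of
whose `ε_c`, `c ≠ 0`, vanish. -/
lemma no_big_unbarred (n : ℕ) (w : List (CLetter n))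
    (hw : w.Pairwise (fun x y => toC n y ≤ toC n x))
    (h0 : ∀ c : Fin n, (c : ℕ) ≠ 0 → epsW n c w = 0) :
    ∀ y ∈ w, ∀ m : Fin n, y = Sum.inl m → (m : ℕ) ≤ 1 := by
  rintro y hy m rfl
  by_contra hm
  push_neg at hm
  have hmn := m.isLt
  set c : Fin n := ⟨(m : ℕ) - 1, by omega⟩ with hc
  have hε : epsL n c (Sum.inl m) = 1 := by
    simp only [epsL, hc]; split <;> omega
  have hcne : (c : ℕ) ≠ 0 := by simp [hc]; omega
  obtain ⟨x, hx, hφ, hle⟩ := exists_phi n c w hw (h0 c hcne) (Sum.inl m) hy hε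
  rcases x with j | j
  · have hj : (j : ℕ) = (m : ℕ) - 1 := by
      simp only [phiL] at hφ; exact of_ite_one hφ
    simp only [toC] at hle
    omega
  · have hj : (j : ℕ) = ((m : ℕ) - 1) + 1 := by
      simp only [phiL] at hφ; exact of_ite_one hφ
    have := no_barred n w hw h0 (Sum.inr j) hx j rfl
    omega

/-- Every letter of a weakly decreasing highest weight word (all `ε_c = 0`) is `1`. -/
lemma f_letters (n : ℕ) (hn : 2 ≤ n) (w : List (CLetter n))
    (hw : w.Pairwise (fun x y => toC n y ≤ toC n x))
    (h0 : ∀ c : Fin n, epsW n c w = 0) :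
    ∀ y ∈ w, y = Sum.inl ⟨0, by omega⟩ := by
  have h0' : ∀ c : Fin n, (c : ℕ) ≠ 0 → epsW n c w = 0 := fun c _ => h0 c
  intro y hy
  set c0 : Fin n := ⟨0, by omega⟩ with hc0
  rcases y with m | m
  · -- unbarred: show m = 0
    have hm1 : (m : ℕ) ≤ 1 := no_big_unbarred n w hw h0' (Sum.inl m) hy m rfl
    rcases Nat.lt_or_ge (m : ℕ) 1 with h | h
    · have : (m : ℕ) = 0 := by omega
      simp [Fin.ext_iff, this, hc0]
    · exfalso
      have hm : (m : ℕ) = 1 := by omega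
      have hε : epsL n c0 (Sum.inl m) = 1 := by
        simp only [epsL, hc0]; split <;> omega
      obtain ⟨x, hx, hφ, hle⟩ := exists_phi n c0 w hw (h0 c0) (Sum.inl m) hy hε
      rcases x with j | j
      · have hj : (j : ℕ) = 0 := by
          simp only [phiL] at hφ; exact of_ite_one hφ
        simp only [toC] at hle
        omega
      · have hj : (j : ℕ) = 1 := by
          simp only [phiL] at hφ; exact of_ite_one hφ
        have := no_barred n w hw h0' (Sum.inr j) hx j rfl
        omega
  · exfalso
    have hm0 : (m : ℕ) = 0 := no_barred n w hw h0' (Sum.inr m) hy m rfl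
    have hε : epsL n c0 (Sum.inr m) = 1 := by
      simp only [epsL, hc0]; split <;> omega
    obtain ⟨x, hx, hφ, hle⟩ := exists_phi n c0 w hw (h0 c0) (Sum.inr m) hy hε
    have hmn := m.isLt
    rcases x with j | j
    · have hj : (j : ℕ) = 0 := by
        simp only [phiL] at hφ; exact of_ite_one hφ
      simp only [toC] at hle
      omega
    · have hj : (j : ℕ) = 1 := by
        simp only [phiL] at hφ; exact of_ite_one hφ
      have := no_barred n w hw h0' (Sum.inr j) hx j rfl
      omega

/-- Writing a step function as a concatenation of replicates. -/
lemma ofFn_step {α : Type*} (k b a : ℕ) (h : b + a ≤ k) (x y z : α) :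
    List.ofFn (fun j : Fin k => if (j : ℕ) < b then x else if (j : ℕ) < b + a then y else z)
      = List.replicate b x ++ (List.replicate a y ++ List.replicate (k - (b + a)) z) := by
  apply List.ext_getElem
  · simp; omega
  · intro i h1 h2
    simp only [List.getElem_ofFn]
    by_cases hb : i < b
    · rw [List.getElem_append_left (by simpa using hb)]
      simp [hb, List.getElem_replicate]
    · rw [List.getElem_append_right (by simpa using hb)]
      simp only [List.length_replicate]
      by_cases ha : i < b + a
      · rw [List.getElem_append_left (by simp; omega)]
        simp [hb, ha, List.getElem_replicate]
      · rw [List.getElem_append_right (by simp; omega)]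
        simp [hb, ha, List.getElem_replicate]

/-- Membership in a lower set of `Fin k` is equivalent to being below its cardinality. -/
lemma lowerset_mem_iff {k : ℕ} (S : Finset (Fin k))
    (hS : ∀ i j : Fin k, i ≤ j → j ∈ S → i ∈ S) (j : Fin k) :
    j ∈ S ↔ (j : ℕ) < S.card := by
  constructor
  · intro hj
    have hsub : Finset.Iic j ⊆ S := fun i hi => hS i j (Finset.mem_Iic.1 hi) hj
    have := Finset.card_le_card hsub
    rw [Fin.card_Iic] at this
    omega
  · intro hj
    by_contra hjS
    have hsub : S ⊆ Finset.Iio j := by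
      intro i hi
      rw [Finset.mem_Iio]
      rcases lt_or_ge i j with h | h
      · exact h
      · exact absurd (hS j i h hi) hjS
    have := Finset.card_le_card hsub
    rw [Fin.card_Iio] at this
    omega


/-- The canonical highest-weight second row `1̄^b 2^a 1^(k-b-a)`. -/
def stepf (n k : ℕ) (hn : 2 ≤ n) (a b : ℕ) : Fin k → CLetter n := fun j =>
  if (j : ℕ) < b then Sum.inr ⟨0, by omega⟩
  else if (j : ℕ) < b + a then Sum.inl ⟨1, by omega⟩
  else Sum.inl ⟨0, by omega⟩

lemma stepf_apply' (n k : ℕ) (hn : 2 ≤ n) (a b i : ℕ) (hik : i < k) :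
    stepf n k hn a b ⟨i, hik⟩ =
      if i < b then Sum.inr ⟨0, by omega⟩
      else if i < b + a then Sum.inl ⟨1, by omega⟩
      else Sum.inl ⟨0, by omega⟩ := rfl

lemma stepf_dec (n k : ℕ) (hn : 2 ≤ n) (a b : ℕ) : DecWord n k (stepf n k hn a b) := by
  intro j j' h
  have h' : (j : ℕ) ≤ (j' : ℕ) := h
  unfold stepf
  split_ifs <;> simp [toC] <;> omega

lemma const_dec (n l : ℕ) (h0 : 0 < n) : DecWord n l (fun _ => Sum.inl ⟨0, h0⟩) := by
  intro j j' _
  exact le_refl _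

lemma stepf_eps (n k : ℕ) (hn : 2 ≤ n) (a b : ℕ) (hba : b + a ≤ k) (c : Fin n) :
    epsW n c (List.ofFn (stepf n k hn a b)) = if (c : ℕ) = 0 then b + a else 0 := by
  unfold stepf
  rw [ofFn_step k b a hba]
  by_cases hc : (c : ℕ) = 0
  · rw [epsW_rep_cons n c _ b _ (by simp [epsL, hc]) (by simp only [phiL]; split <;> omega),
      epsW_rep_cons n c _ a _ (by simp only [epsL]; split <;> omega)
        (by simp only [phiL]; split <;> omega),
      epsW_all_zero n c _ (by
        intro x hx
        rw [List.eq_of_mem_replicate hx]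
        simp only [epsL]; split <;> omega)]
    simp [hc]
  · rw [epsW_all_zero n c _ ?_]
    · simp [hc]
    · intro x hx
      simp only [List.mem_append] at hx
      rcases hx with hx | hx | hx <;> rw [List.eq_of_mem_replicate hx] <;>
        simp only [epsL] <;> split <;> omega

lemma full_eps (n l k : ℕ) (hn : 2 ≤ n) (hlk : k ≤ l) (a b : ℕ) (hba : b + a ≤ k) (c : Fin n) :
    epsW n c (List.ofFn (fun _ : Fin l => Sum.inl ⟨0, by omega⟩)
      ++ List.ofFn (stepf n k hn a b)) = 0 := by
  rw [List.ofFn_const, epsW_rep_one n c (by omega), stepf_eps n k hn a b hba c]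
  by_cases hc : (c : ℕ) = 0 <;> simp [hc] <;> omega

lemma stepf_inj (n k : ℕ) (hn : 2 ≤ n) (a b a' b' : ℕ) (h1 : b + a ≤ k) (h2 : b' + a' ≤ k)
    (h : stepf n k hn a b = stepf n k hn a' b') : a = a' ∧ b = b' := by
  have hbb : b = b' := by
    rcases Nat.lt_trichotomy b b' with hb | hb | hb
    · exfalso
      have hL := congrFun h ⟨b, by omega⟩
      rw [stepf_apply', stepf_apply', if_neg (show ¬(b < b) by omega),
        if_pos (show b < b' by omega)] at hL
      split at hL <;> simp at hL
    · exact hb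
    · exfalso
      have hL := congrFun h ⟨b', by omega⟩
      rw [stepf_apply', stepf_apply', if_pos (show b' < b by omega),
        if_neg (show ¬(b' < b') by omega)] at hL
      split at hL <;> simp at hL
  subst hbb
  refine ⟨?_, rfl⟩
  rcases Nat.lt_trichotomy a a' with ha | ha | ha
  · exfalso
    have hL := congrFun h ⟨b + a, by omega⟩
    rw [stepf_apply', stepf_apply', if_neg (show ¬(b + a < b) by omega),
      if_neg (show ¬(b + a < b + a) by omega), if_pos (show b + a < b + a' by omega)] at hL
    simp [Fin.ext_iff] at hL
  · exact ha
  · exfalso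
    have hL := congrFun h ⟨b + a', by omega⟩
    rw [stepf_apply', stepf_apply', if_neg (show ¬(b + a' < b) by omega),
      if_pos (show b + a' < b + a by omega),
      if_neg (show ¬(b + a' < b + a') by omega)] at hL
    simp [Fin.ext_iff] at hL

lemma triangle_card (k : ℕ) :
    Nat.card {q : ℕ × ℕ // q.1 + q.2 ≤ k} = (k + 1) * (k + 2) / 2 := by
  have hbij : Function.Bijective (fun q : {q : ℕ × ℕ // q.1 + q.2 ≤ k} =>
      (⟨⟨q.1.1 + q.1.2, by have := q.2; omega⟩,
        ⟨q.1.1, Nat.lt_succ_of_le (Nat.le_add_right _ _)⟩⟩ :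
        Σ s : Fin (k + 1), Fin ((s : ℕ) + 1))) := by
    constructor
    · rintro ⟨⟨a, b⟩, hq⟩ ⟨⟨a', b'⟩, hq'⟩ h
      have h1 : a + b = a' + b' := congrArg (fun p => ((p.1 : Fin (k+1)) : ℕ)) h
      have h2 : a = a' := congrArg (fun p : (Σ s : Fin (k + 1), Fin ((s : ℕ) + 1)) =>
        (p.2 : ℕ)) h
      apply Subtype.ext
      simp only [Prod.mk.injEq]
      omega
    · rintro ⟨⟨t, ht⟩, ⟨i, hi⟩⟩
      have hi' : i < t + 1 := hi
      obtain ⟨j, rfl⟩ : ∃ j, t = i + j := ⟨t - i, by omega⟩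
      exact ⟨⟨(i, j), by omega⟩, rfl⟩
  rw [Nat.card_eq_of_bijective _ hbij, Nat.card_eq_fintype_card, Fintype.card_sigma]
  simp only [Fintype.card_fin]
  rw [Fin.sum_univ_eq_sum_range (fun i => i + 1) (k + 1)]
  have hs : ∑ i ∈ Finset.range (k + 2), i = ∑ i ∈ Finset.range (k + 1), (i + 1) := by
    rw [Finset.sum_range_succ' (fun i => i) (k + 1)]
    simp
  have hg := Finset.sum_range_id_mul_two (k + 2)
  rw [hs] at hg
  have hm : (k + 1) * (k + 2) = (∑ i ∈ Finset.range (k + 1), (i + 1)) * 2 := by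
    have h21 : k + 2 - 1 = k + 1 := by omega
    rw [hg, h21, Nat.mul_comm]
  generalize hM : (∑ i ∈ Finset.range (k + 1), (i + 1)) = X at hm ⊢
  generalize hN : (k + 1) * (k + 2) = N at hm ⊢
  omega

lemma toC_L0 (n : ℕ) (h : 0 < n) : toC n (Sum.inl ⟨0, h⟩) = 0 := rfl
lemma toC_L1 (n : ℕ) (h : 1 < n) : toC n (Sum.inl ⟨1, h⟩) = 1 := rfl
lemma toC_LB (n : ℕ) (h : 0 < n) : toC n (Sum.inr ⟨0, h⟩) = 2 * n - 1 := rfl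

set_option maxHeartbeats 1000000 in
/-- the number of highest weight vertices of the type `C_n` crystal
`B_l ⊗ B_k` (`l ≥ k`, `n ≥ 2`) equals `(k+1)(k+2)/2`, the number of pairs `(a,b)` of
nonnegative integers with `a + b ≤ k`. -/
theorem card_highest_weight_vertices (n l k : ℕ) (hn : 2 ≤ n) (hlk : k ≤ l) :
    Nat.card {p : (Fin l → CLetter n) × (Fin k → CLetter n) //
        DecWord n l p.1 ∧ DecWord n k p.2 ∧
        ∀ c : Fin n, epsW n c (List.ofFn p.1 ++ List.ofFn p.2) = 0} =
      (k + 1) * (k + 2) / 2 := by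
  classical
  have main : Nat.card {q : ℕ × ℕ // q.1 + q.2 ≤ k} =
      Nat.card {p : (Fin l → CLetter n) × (Fin k → CLetter n) //
        DecWord n l p.1 ∧ DecWord n k p.2 ∧
        ∀ c : Fin n, epsW n c (List.ofFn p.1 ++ List.ofFn p.2) = 0} := by
    apply Nat.card_eq_of_bijective
      (f := fun q => ⟨((fun _ => Sum.inl ⟨0, by omega⟩), stepf n k hn q.1.1 q.1.2),
        const_dec n l (by omega),
        stepf_dec n k hn q.1.1 q.1.2,
        fun c => full_eps n l k hn hlk q.1.1 q.1.2 (by have := q.2; omega) c⟩)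
    constructor
    · rintro ⟨⟨a, b⟩, hq⟩ ⟨⟨a', b'⟩, hq'⟩ h
      have h2 : stepf n k hn a b = stepf n k hn a' b' :=
        congrArg (fun p : {p : (Fin l → CLetter n) × (Fin k → CLetter n) //
          DecWord n l p.1 ∧ DecWord n k p.2 ∧
          ∀ c : Fin n, epsW n c (List.ofFn p.1 ++ List.ofFn p.2) = 0} => p.val.2) h
      obtain ⟨ha, hb⟩ := stepf_inj n k hn a b a' b' (by omega) (by omega) h2
      apply Subtype.ext
      simp only [Prod.mk.injEq]
      omega
    · rintro ⟨⟨f, g⟩, hdf, hdg, he⟩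
      have hgw : (List.ofFn g).Pairwise (fun x y => toC n y ≤ toC n x) :=
        List.pairwise_ofFn.2 fun i j hij => hdg i j (le_of_lt hij)
      have hfw : (List.ofFn f).Pairwise (fun x y => toC n y ≤ toC n x) :=
        List.pairwise_ofFn.2 fun i j hij => hdf i j (le_of_lt hij)
      have hfeps : ∀ c : Fin n, epsW n c (List.ofFn f) = 0 := fun c =>
        Nat.le_zero.1 ((epsW_le_append n c _ _).trans (le_of_eq (he c)))
      have hf : f = fun _ => Sum.inl ⟨0, by omega⟩ := by
        funext j
        exact f_letters n hn _ hfw hfeps (f j) (List.mem_ofFn.2 ⟨j, rfl⟩)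
      subst hf
      dsimp only at hdf hdg he
      have hg0 : ∀ c : Fin n, (c : ℕ) ≠ 0 → epsW n c (List.ofFn g) = 0 := by
        intro c hc
        have h := he c
        rw [List.ofFn_const, epsW_rep_one n c (by omega)] at h
        simpa [hc] using h
      have htriple : ∀ j : Fin k, g j = Sum.inl ⟨0, by omega⟩ ∨ g j = Sum.inl ⟨1, by omega⟩
          ∨ g j = Sum.inr ⟨0, by omega⟩ := by
        intro j
        have hmem : g j ∈ List.ofFn g := List.mem_ofFn.2 ⟨j, rfl⟩
        rcases hgj : g j with m | m
        · rw [hgj] at hmem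
          have hm := no_big_unbarred n _ hgw hg0 (Sum.inl m) hmem m rfl
          rcases Nat.lt_or_ge (m : ℕ) 1 with h | h
          · left; exact congrArg Sum.inl (Fin.ext (show (m:ℕ) = 0 by omega))
          · right; left; exact congrArg Sum.inl (Fin.ext (show (m:ℕ) = 1 by omega))
        · rw [hgj] at hmem
          have hm := no_barred n _ hgw hg0 (Sum.inr m) hmem m rfl
          right; right; exact congrArg Sum.inr (Fin.ext (show (m:ℕ) = 0 by omega))
      -- the two counts
      set b := (Finset.univ.filter (fun j : Fin k => g j = Sum.inr ⟨0, by omega⟩)).card with hbdef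
      set a := (Finset.univ.filter (fun j : Fin k => g j = Sum.inl ⟨1, by omega⟩)).card with hadef
      have hbmem : ∀ j : Fin k, g j = Sum.inr ⟨0, by omega⟩ ↔ (j : ℕ) < b := by
        intro j
        rw [hbdef]
        have hlow : ∀ i j : Fin k,
            i ≤ j → j ∈ Finset.univ.filter (fun j : Fin k => g j = Sum.inr ⟨0, by omega⟩) →
            i ∈ Finset.univ.filter (fun j : Fin k => g j = Sum.inr ⟨0, by omega⟩) := by
          intro i j hij hj
          simp only [Finset.mem_filter, Finset.mem_univ, true_and] at hj ⊢
          have hmono := hdg i j hij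
          rw [hj] at hmono
          simp only [toC] at hmono
          rcases htriple i with h0 | h0 | h0
          · rw [h0] at hmono; simp only [toC] at hmono; omega
          · rw [h0] at hmono; simp only [toC] at hmono; omega
          · exact h0
        have := lowerset_mem_iff _ hlow j
        simpa using this
      have hsplit0 : True := trivial
      have hamem : ∀ j : Fin k, g j ≠ Sum.inl ⟨0, by omega⟩ ↔ (j : ℕ) < a + b := by
        have hsplit : Finset.univ.filter (fun j : Fin k => g j ≠ Sum.inl ⟨0, by omega⟩)
            = Finset.univ.filter (fun j : Fin k => g j = Sum.inl ⟨1, by omega⟩)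
              ∪ Finset.univ.filter (fun j : Fin k => g j = Sum.inr ⟨0, by omega⟩) := by
          ext j
          simp only [Finset.mem_filter, Finset.mem_union, Finset.mem_univ, true_and]
          constructor
          · intro h
            rcases htriple j with h0 | h0 | h0
            · exact absurd h0 h
            · exact Or.inl h0
            · exact Or.inr h0
          · rintro (h0 | h0) <;> rw [h0] <;> simp [Fin.ext_iff]
        have hdisj : Disjoint
            (Finset.univ.filter (fun j : Fin k => g j = Sum.inl ⟨1, by omega⟩))
            (Finset.univ.filter (fun j : Fin k => g j = Sum.inr ⟨0, by omega⟩)) := by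
          rw [Finset.disjoint_left]
          intro j h1 h2
          simp only [Finset.mem_filter, Finset.mem_univ, true_and] at h1 h2
          rw [h1] at h2
          simp at h2
        have hcard : (Finset.univ.filter (fun j : Fin k => g j ≠ Sum.inl ⟨0, by omega⟩)).card
            = a + b := by
          rw [hsplit, Finset.card_union_of_disjoint hdisj, hadef, hbdef]
        intro j
        rw [← hcard]
        have hlow : ∀ i j : Fin k,
            i ≤ j → j ∈ Finset.univ.filter (fun j : Fin k => g j ≠ Sum.inl ⟨0, by omega⟩) →
            i ∈ Finset.univ.filter (fun j : Fin k => g j ≠ Sum.inl ⟨0, by omega⟩) := by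
          intro i j hij hj
          simp only [Finset.mem_filter, Finset.mem_univ, true_and] at hj ⊢
          have hmono := hdg i j hij
          have hj1 : 1 ≤ toC n (g j) := by
            rcases htriple j with h0 | h0 | h0
            · exact absurd h0 hj
            · rw [h0, toC_L1]
            · rw [h0, toC_LB]; omega
          intro heq
          rw [heq, toC_L0] at hmono
          omega
        have := lowerset_mem_iff _ hlow j
        simpa using this
      have habk : a + b ≤ k := by
        have hdisj : Disjoint
            (Finset.univ.filter (fun j : Fin k => g j = Sum.inl ⟨1, by omega⟩))
            (Finset.univ.filter (fun j : Fin k => g j = Sum.inr ⟨0, by omega⟩)) := by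
          rw [Finset.disjoint_left]
          intro j h1 h2
          simp only [Finset.mem_filter, Finset.mem_univ, true_and] at h1 h2
          rw [h1] at h2
          simp at h2
        rw [hadef, hbdef, ← Finset.card_union_of_disjoint hdisj]
        exact le_trans (Finset.card_le_univ _) (le_of_eq (by simp))
      have hgeq : g = stepf n k hn a b := by
        funext j
        obtain ⟨i, hik⟩ := j
        rw [stepf_apply' n k hn a b i hik]
        have h1 : g ⟨i, hik⟩ = Sum.inr ⟨0, by omega⟩ ↔ i < b := hbmem ⟨i, hik⟩
        have h2 : g ⟨i, hik⟩ ≠ Sum.inl ⟨0, by omega⟩ ↔ i < a + b := hamem ⟨i, hik⟩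
        rcases htriple ⟨i, hik⟩ with h0 | h0 | h0
        · rw [if_neg (show ¬(i < b) from fun hlt => by
              have hx := h1.2 hlt; rw [h0] at hx; simp at hx),
            if_neg (show ¬(i < b + a) from fun hlt => (h2.2 (by omega)) h0)]
          exact h0
        · rw [if_neg (show ¬(i < b) from fun hlt => by
              have hx := h1.2 hlt; rw [h0] at hx; simp at hx),
            if_pos (show i < b + a from by
              have hx : i < a + b := h2.1 (by rw [h0]; simp [Fin.ext_iff])
              omega)]
          exact h0
        · rw [if_pos (h1.1 h0)]
          exact h0
      refine ⟨⟨(a, b), by omega⟩, ?_⟩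
      apply Subtype.ext
      dsimp only
      rw [Prod.mk.injEq]
      exact ⟨rfl, hgeq.symm⟩
  rw [← main, triangle_card]
end
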